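/- arXiv:1705.03716 — 9 statements merged into one kernel-verified Lean document; each statement's English description precedes it below -/
import Mathlib

section
/- If Γ is a countable locally finite group equipped with the proper left-invariant metric coming from an increasing exhausting sequence of finite subgroups, then (Γ,d) has asymptotic dimension zero, i.e., for every R > 0 there is a uniform bound on the diameters of the R-connected components of Γ. -/
/-- A countable locally finite group with the proper left-invariant metric coming from an
increasing exhausting sequence of finite subgroups has asymptotic dimension zero: for every
R > 0 the diameters of the R-connected components are uniformly bounded. -/
theorem stmt_5 (Γ : Type*) [Group Γ] [Countable Γ]
    (hlf : ∀ S : Finset Γ, ((Subgroup.closure (S : Set Γ) : Subgroup Γ) : Set Γ).Finite)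
    (G : ℕ → Subgroup Γ)
    (hG0 : G 0 = ⊥) (hmono : Monotone G) (hfin : ∀ n, ((G n : Subgroup Γ) : Set Γ).Finite)
    (hunion : (⋃ n, ((G n : Subgroup Γ) : Set Γ)) = Set.univ)
    (d : Γ → Γ → ℝ) (hd : ∀ g h, d g h = (sInf {n : ℕ | g⁻¹ * h ∈ G n} : ℕ)) :
    ∀ R > (0 : ℝ), ∃ B : ℝ, ∀ x y : Γ,
      Relation.ReflTransGen (fun a b : Γ => d a b ≤ R) x y → d x y ≤ B := by
  intro R hR
  obtain ⟨N, hN⟩ := exists_nat_ge R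
  refine ⟨N, fun x y hxy => ?_⟩
  have hne : ∀ g h : Γ, {n : ℕ | g⁻¹ * h ∈ G n}.Nonempty := by
    intro g h
    have : g⁻¹ * h ∈ ⋃ n, ((G n : Subgroup Γ) : Set Γ) := by rw [hunion]; trivial
    exact Set.mem_iUnion.mp this
  have key : ∀ a b : Γ, d a b ≤ R → a⁻¹ * b ∈ G N := by
    intro a b hab
    rw [hd] at hab
    have h1 : sInf {n : ℕ | a⁻¹ * b ∈ G n} ≤ N := by exact_mod_cast hab.trans hN
    have h2 : sInf {n : ℕ | a⁻¹ * b ∈ G n} ∈ {n : ℕ | a⁻¹ * b ∈ G n} :=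
      Nat.sInf_mem (hne a b)
    exact hmono h1 h2
  have main : x⁻¹ * y ∈ G N := by
    induction hxy with
    | refl => simpa using (G N).one_mem
    | @tail b c _ hrel ih =>
        have hb : b⁻¹ * c ∈ G N := key b c hrel
        have := mul_mem ih hb
        simpa [mul_assoc] using this
  rw [hd]
  exact_mod_cast Nat.cast_le.mpr (Nat.sInf_le main)
end

section
/- Let Γ be a countable group with a proper left-invariant metric d. Then Γ is locally finite if and only if (Γ,d) has asymptotic dimension zero. -/
/-- A countable group with a proper left-invariant metric is locally finite iff the metric
space has asymptotic dimension zero (uniformly bounded R-connected components for every R > 0). -/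
theorem stmt_6 (Γ : Type*) [Group Γ] [Countable Γ] (d : Γ → Γ → ℝ)
    (hzero : ∀ g h : Γ, d g h = 0 ↔ g = h)
    (hsymm : ∀ g h : Γ, d g h = d h g)
    (htri : ∀ g h k : Γ, d g k ≤ d g h + d h k)
    (hinv : ∀ g s t : Γ, d (g * s) (g * t) = d s t)
    (hproper : ∀ g : Γ, ∀ R : ℝ, {h : Γ | d g h ≤ R}.Finite) :
    (∀ S : Finset Γ, ((Subgroup.closure (S : Set Γ) : Subgroup Γ) : Set Γ).Finite) ↔
    (∀ R > (0 : ℝ), ∃ B : ℝ, ∀ x y : Γ,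
      Relation.ReflTransGen (fun a b : Γ => d a b ≤ R) x y → d x y ≤ B) := by
  have hd1 : ∀ a b : Γ, d a b = d 1 (a⁻¹ * b) := by
    intro a b
    have := hinv a⁻¹ a b
    simpa using this.symm
  constructor
  · intro hLF R hR
    have hf := hproper 1 R
    set S := hf.toFinset with hS
    have hSc : (S : Set Γ) = {h : Γ | d 1 h ≤ R} := hf.coe_toFinset
    have hfin : ((Subgroup.closure (S : Set Γ) : Subgroup Γ) : Set Γ).Finite := hLF S
    have himg : ((fun g => d 1 g) '' ((Subgroup.closure (S : Set Γ) : Subgroup Γ) : Set Γ)).Finite :=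
      hfin.image _
    obtain ⟨B, hB⟩ := himg.bddAbove
    refine ⟨B, ?_⟩
    intro x y hxy
    have hmem : x⁻¹ * y ∈ Subgroup.closure (S : Set Γ) := by
      induction hxy with
      | refl => simpa using Subgroup.one_mem _
      | tail hbc hstep ih =>
        rename_i b c
        have hbc' : b⁻¹ * c ∈ Subgroup.closure (S : Set Γ) := by
          apply Subgroup.subset_closure
          rw [hSc]
          have : d 1 (b⁻¹ * c) = d b c := (hd1 b c).symm
          simpa [this] using hstep
        have := Subgroup.mul_mem _ ih hbc'
        simpa [mul_assoc] using this
    have : d 1 (x⁻¹ * y) ≤ B := hB ⟨x⁻¹ * y, hmem, rfl⟩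
    rw [hd1 x y]
    exact this
  · intro hAD S
    have himg : ((fun s => d 1 s) '' (S : Set Γ)).Finite := (S.finite_toSet).image _
    obtain ⟨M, hM⟩ := himg.bddAbove
    set R : ℝ := max 1 M with hRdef
    have hR : R > 0 := lt_of_lt_of_le one_pos (le_max_left _ _)
    obtain ⟨B, hB⟩ := hAD R hR
    have hsym : Symmetric (fun a b : Γ => d a b ≤ R) := by
      intro a b h
      simpa [hsymm a b] using h
    have hchain : ∀ g ∈ Subgroup.closure (S : Set Γ),
        Relation.ReflTransGen (fun a b : Γ => d a b ≤ R) 1 g := by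
      intro g hg
      induction hg using Subgroup.closure_induction with
      | mem s hs =>
        refine Relation.ReflTransGen.single ?_
        have : d 1 s ≤ M := hM ⟨s, hs, rfl⟩
        exact this.trans (le_max_right _ _)
      | one => exact Relation.ReflTransGen.refl
      | mul a b ha hb iha ihb =>
        refine iha.trans ?_
        have := Relation.ReflTransGen.lift (p := fun x y : Γ => d x y ≤ R)
          (fun x => a * x) (fun x y h => by simpa [Function.onFun, hinv a x y] using h) _ _ ihb
        simpa [Function.onFun] using this
      | inv a ha iha =>
        have h1 : Relation.ReflTransGen (fun x y : Γ => d x y ≤ R) a⁻¹ 1 := by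
          have := Relation.ReflTransGen.lift (p := fun x y : Γ => d x y ≤ R)
            (fun x => a⁻¹ * x) (fun x y h => by simpa [Function.onFun, hinv a⁻¹ x y] using h) _ _ iha
          simpa [Function.onFun] using this
        exact (by haveI : Std.Symm (fun x y : Γ => d x y ≤ R) := ⟨fun x y h => hsym h⟩; exact Std.Symm.symm _ _ h1)
    have hsub : ((Subgroup.closure (S : Set Γ) : Subgroup Γ) : Set Γ) ⊆ {h : Γ | d 1 h ≤ B} := by
      intro g hg
      exact hB 1 g (hchain g hg)
    exact (hproper 1 B).subset hsub
end

section
/- Let Γ and Λ be countable locally finite groups with proper left-invariant metrics d_Γ and d_Λ. If f: Γ → Λ is a bijective coarse equivalence, then for every finite subgroup F of Γ there is a finite subgroup E of Λ such that |F| divides |E|. -/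
/-- A map is bornologous with respect to given distance functions. -/
def IsBornologous {X Y : Type*} (dX : X → X → ℝ) (dY : Y → Y → ℝ) (f : X → Y) : Prop :=
  ∀ R > (0 : ℝ), ∃ S > (0 : ℝ), ∀ x x' : X, dX x x' ≤ R → dY (f x) (f x') ≤ S

/-- If two countable locally finite groups with proper left-invariant metrics are related by
a bijective coarse equivalence f : Γ → Λ, then for every finite subgroup F of Γ there is a
finite subgroup E of Λ with |F| dividing |E|. -/
theorem stmt_7 (Γ Λ : Type*) [Group Γ] [Group Λ] [Countable Γ] [Countable Λ]
    (hΓlf : ∀ S : Finset Γ, ((Subgroup.closure (S : Set Γ) : Subgroup Γ) : Set Γ).Finite)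
    (hΛlf : ∀ S : Finset Λ, ((Subgroup.closure (S : Set Λ) : Subgroup Λ) : Set Λ).Finite)
    (dΓ : Γ → Γ → ℝ) (dΛ : Λ → Λ → ℝ)
    (hΓzero : ∀ g h : Γ, dΓ g h = 0 ↔ g = h)
    (hΓsymm : ∀ g h : Γ, dΓ g h = dΓ h g)
    (hΓtri : ∀ g h k : Γ, dΓ g k ≤ dΓ g h + dΓ h k)
    (hΓinv : ∀ g s t : Γ, dΓ (g * s) (g * t) = dΓ s t)
    (hΓproper : ∀ g : Γ, ∀ R : ℝ, {h : Γ | dΓ g h ≤ R}.Finite)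
    (hΛzero : ∀ g h : Λ, dΛ g h = 0 ↔ g = h)
    (hΛsymm : ∀ g h : Λ, dΛ g h = dΛ h g)
    (hΛtri : ∀ g h k : Λ, dΛ g k ≤ dΛ g h + dΛ h k)
    (hΛinv : ∀ g s t : Λ, dΛ (g * s) (g * t) = dΛ s t)
    (hΛproper : ∀ g : Λ, ∀ R : ℝ, {h : Λ | dΛ g h ≤ R}.Finite)
    (f : Γ → Λ) (hbij : Function.Bijective f) (hf : IsBornologous dΓ dΛ f)
    (hcoarse : ∃ g : Λ → Γ, IsBornologous dΛ dΓ g ∧ ∃ C : ℝ,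
      (∀ y : Λ, dΛ (f (g y)) y ≤ C) ∧ (∀ x : Γ, dΓ (g (f x)) x ≤ C)) :
    ∀ F : Subgroup Γ, ((F : Subgroup Γ) : Set Γ).Finite →
      ∃ E : Subgroup Λ, ((E : Subgroup Λ) : Set Λ).Finite ∧ Nat.card F ∣ Nat.card E := by
  intro F hF
  classical
  set Ffin := hF.toFinset with hFfin
  have h1F : (1 : Γ) ∈ F := F.one_mem
  have h1Ffin : (1 : Γ) ∈ Ffin := by simp [Ffin, h1F]
  have hne : (Ffin ×ˢ Ffin).Nonempty := ⟨((1:Γ),(1:Γ)), Finset.mk_mem_product h1Ffin h1Ffin⟩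
  set R := (Ffin ×ˢ Ffin).sup' hne (fun p => dΓ p.1 p.2) + 1 with hR
  have hsup0 : (0:ℝ) ≤ (Ffin ×ˢ Ffin).sup' hne (fun p => dΓ p.1 p.2) := by
    have := Finset.le_sup' (f := fun p : Γ × Γ => dΓ p.1 p.2)
      (b := ((1:Γ),(1:Γ))) (Finset.mk_mem_product h1Ffin h1Ffin)
    exact le_trans (le_of_eq ((hΓzero 1 1).2 rfl).symm) this
  have hRpos : R > 0 := by rw [hR]; linarith
  obtain ⟨S, hSpos, hS⟩ := hf R hRpos
  have hcoset : ∀ (x s : Γ), s ∈ F → dΛ (f x) (f (x * s)) ≤ S := by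
    intro x s hs
    apply hS
    have h1 : dΓ x (x * s) = dΓ 1 s := by
      have := hΓinv x 1 s; simpa using this
    rw [h1]
    have h2 : dΓ 1 s ≤ (Ffin ×ˢ Ffin).sup' hne (fun p => dΓ p.1 p.2) :=
      Finset.le_sup' (f := fun p : Γ × Γ => dΓ p.1 p.2)
        (b := ((1:Γ), s)) (Finset.mk_mem_product h1Ffin (hF.mem_toFinset.2 hs))
    rw [hR]; linarith
  have hball : {h : Λ | dΛ 1 h ≤ S}.Finite := hΛproper 1 S
  set E := Subgroup.closure ((hball.toFinset : Finset Λ) : Set Λ) with hEdef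
  have hEfin : ((E : Subgroup Λ) : Set Λ).Finite := hΛlf hball.toFinset
  refine ⟨E, hEfin, ?_⟩
  set A : Set Γ := f ⁻¹' (E : Set Λ) with hA
  have hAfin : A.Finite := hEfin.preimage hbij.injective.injOn
  have hAinv : ∀ x ∈ A, ∀ s ∈ F, x * s ∈ A := by
    intro x hx s hs
    have hg : (f x)⁻¹ * f (x * s) ∈ ((hball.toFinset : Finset Λ) : Set Λ) := by
      simp only [Set.Finite.coe_toFinset, Set.mem_setOf_eq]
      have h1 := hΛinv (f x) 1 ((f x)⁻¹ * f (x * s))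
      rw [mul_one, mul_inv_cancel_left] at h1
      rw [← h1]
      exact hcoset x s hs
    have hgE : (f x)⁻¹ * f (x * s) ∈ E := Subgroup.subset_closure hg
    have : f (x * s) = f x * ((f x)⁻¹ * f (x * s)) := by group
    have hxE : f x ∈ E := hx
    show f (x * s) ∈ (E : Set Λ)
    rw [this]
    exact E.mul_mem hxE hgE
  -- Nat.card A = Nat.card E
  have hcardAE : Nat.card A = Nat.card (E : Set Λ) :=
    Nat.card_congr ((Equiv.ofBijective f hbij).subtypeEquiv (fun a => Iff.rfl))
  -- counting
  have key : Ffin.card ∣ hAfin.toFinset.card := by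
    have hq := Finset.card_eq_sum_card_fiberwise
      (f := fun x => (QuotientGroup.mk x : Γ ⧸ F)) (s := hAfin.toFinset)
      (t := hAfin.toFinset.image (fun x => (QuotientGroup.mk x : Γ ⧸ F)))
      (fun x hx => Finset.mem_image_of_mem _ hx)
    have hfib : ∀ b ∈ hAfin.toFinset.image (fun x => (QuotientGroup.mk x : Γ ⧸ F)),
        (hAfin.toFinset.filter (fun x => (QuotientGroup.mk x : Γ ⧸ F) = b)).card = Ffin.card := by
      intro b hb
      obtain ⟨a, ha, rfl⟩ := Finset.mem_image.1 hb
      have hset : hAfin.toFinset.filter (fun x => (QuotientGroup.mk x : Γ ⧸ F) = QuotientGroup.mk a)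
          = Ffin.image (fun s => a * s) := by
        ext x
        simp only [Finset.mem_filter, Finset.mem_image, Set.Finite.mem_toFinset]
        constructor
        · rintro ⟨hxA, hxq⟩
          refine ⟨a⁻¹ * x, ?_, by group⟩
          have := QuotientGroup.eq.mp hxq.symm
          simpa [Ffin] using this
        · rintro ⟨s, hs, rfl⟩
          have hsF : s ∈ F := by simpa [Ffin] using hs
          refine ⟨hAinv a (by simpa [Set.Finite.mem_toFinset] using ha) s hsF, ?_⟩
          rw [QuotientGroup.eq]
          simpa using F.inv_mem hsF
      rw [hset]
      exact Finset.card_image_of_injective _ (mul_right_injective a)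
    rw [hq, Finset.sum_congr rfl hfib, Finset.sum_const, smul_eq_mul]
    exact dvd_mul_left _ _
  -- translate cardinalities
  have hNF : Nat.card F = Ffin.card := by
    have : Nat.card F = Nat.card ((F : Subgroup Γ) : Set Γ) := rfl
    rw [this, Nat.card_coe_set_eq, Set.ncard_eq_toFinset_card _ hF]
  have hNE : Nat.card (E : Set Λ) = Nat.card E := rfl
  have hNA : Nat.card A = hAfin.toFinset.card := by
    rw [Nat.card_coe_set_eq, Set.ncard_eq_toFinset_card _ hAfin]
  rw [hNF, ← hNE, ← hcardAE, hNA]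
  exact key
end

section
/- Let Γ and Λ be countable locally finite groups with proper left-invariant metrics. If Γ and Λ are bijectively coarsely equivalent, then they have the same supernatural number: for every prime p and integer m ≥ 1, p^m divides the order of some finite subgroup of Γ if and only if p^m divides the order of some finite subgroup of Λ. -/
lemma key_lemma {Γ Λ : Type*} [Group Γ] [Group Λ]
    (hΛlf : ∀ S : Finset Λ, ((Subgroup.closure (S : Set Λ) : Subgroup Λ) : Set Λ).Finite)
    (dΓ : Γ → Γ → ℝ) (dΛ : Λ → Λ → ℝ)
    (hΓinv : ∀ g s t : Γ, dΓ (g * s) (g * t) = dΓ s t)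
    (hΛinv : ∀ g s t : Λ, dΛ (g * s) (g * t) = dΛ s t)
    (hΛproper : ∀ g : Λ, ∀ R : ℝ, {h : Λ | dΛ g h ≤ R}.Finite)
    (f : Γ → Λ) (hbij : Function.Bijective f) (hf : IsBornologous dΓ dΛ f)
    (F : Subgroup Γ) (hF : ((F : Subgroup Γ) : Set Γ).Finite) :
    ∃ E : Subgroup Λ, ((E : Subgroup Λ) : Set Λ).Finite ∧ Nat.card F ∣ Nat.card E := by
  obtain ⟨R, hR⟩ := (hF.image2 dΓ hF).bddAbove
  obtain ⟨S, hSpos, hS⟩ := hf (max R 1) (lt_of_lt_of_le one_pos (le_max_right R 1))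
  set B : Set Λ := {y | dΛ 1 y ≤ S} with hB
  have hBfin : B.Finite := hΛproper 1 S
  set E := Subgroup.closure B with hE
  have hEfin : ((E : Subgroup Λ) : Set Λ).Finite := by
    have := hΛlf hBfin.toFinset
    rwa [Set.Finite.coe_toFinset] at this
  have hdist : ∀ x x' : Γ, x⁻¹ * x' ∈ F → (f x)⁻¹ * (f x') ∈ E := by
    intro x x' hx
    have h1 : dΓ x x' ≤ max R 1 := by
      have he : dΓ x x' = dΓ 1 (x⁻¹ * x') := by
        have := hΓinv x 1 (x⁻¹ * x'); simpa using this
      rw [he]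
      refine le_trans (hR ?_) (le_max_left R 1)
      exact Set.mem_image2_of_mem F.one_mem hx
    have h2 := hS x x' h1
    have h3 : dΛ 1 ((f x)⁻¹ * (f x')) ≤ S := by
      have := hΛinv (f x) 1 ((f x)⁻¹ * (f x'))
      simp only [mul_one, mul_inv_cancel_left] at this
      linarith
    exact Subgroup.subset_closure h3
  set T : Set Γ := f ⁻¹' (E : Set Λ) with hT
  have hTsat : T = QuotientGroup.mk ⁻¹' ((QuotientGroup.mk : Γ → Γ ⧸ F) '' T) := by
    ext x
    constructor
    · intro hx; exact ⟨x, hx, rfl⟩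
    · rintro ⟨x', hx', hmk⟩
      have hmem : x'⁻¹ * x ∈ F := (QuotientGroup.eq).1 hmk
      have h4 : (f x')⁻¹ * (f x) ∈ E := hdist x' x hmem
      have h5 : f x' ∈ E := hx'
      have : f x' * ((f x')⁻¹ * f x) ∈ E := mul_mem h5 h4
      exact (by simpa [mul_inv_cancel_left] using this : f x ∈ E)
  have e1 : T ≃ (E : Set Λ) := by
    refine Equiv.ofBijective (fun x => ⟨f x, x.2⟩) ⟨?_, ?_⟩
    · intro a b hab
      exact Subtype.ext (hbij.1 (congrArg Subtype.val hab))
    · rintro ⟨y, hy⟩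
      obtain ⟨x, rfl⟩ := hbij.2 y
      exact ⟨⟨x, hy⟩, rfl⟩
  have e2 : T ≃ (F × ((QuotientGroup.mk : Γ → Γ ⧸ F) '' T)) :=
    (Equiv.setCongr hTsat).trans (QuotientGroup.preimageMkEquivSubgroupProdSet F _)
  refine ⟨E, hEfin, ?_⟩
  have hc : Nat.card E = Nat.card F * Nat.card ((QuotientGroup.mk : Γ → Γ ⧸ F) '' T) := by
    have h1 : Nat.card E = Nat.card T := Nat.card_congr e1.symm
    rw [h1, Nat.card_congr e2, Nat.card_prod]
  exact ⟨_, hc⟩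

/-- Bijectively coarsely equivalent countable locally finite groups have the same
supernatural number: for every prime p and m ≥ 1, p^m divides the order of some finite
subgroup of Γ iff it divides the order of some finite subgroup of Λ. -/
theorem stmt_8 (Γ Λ : Type*) [Group Γ] [Group Λ] [Countable Γ] [Countable Λ]
    (hΓlf : ∀ S : Finset Γ, ((Subgroup.closure (S : Set Γ) : Subgroup Γ) : Set Γ).Finite)
    (hΛlf : ∀ S : Finset Λ, ((Subgroup.closure (S : Set Λ) : Subgroup Λ) : Set Λ).Finite)
    (dΓ : Γ → Γ → ℝ) (dΛ : Λ → Λ → ℝ)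
    (hΓzero : ∀ g h : Γ, dΓ g h = 0 ↔ g = h)
    (hΓsymm : ∀ g h : Γ, dΓ g h = dΓ h g)
    (hΓtri : ∀ g h k : Γ, dΓ g k ≤ dΓ g h + dΓ h k)
    (hΓinv : ∀ g s t : Γ, dΓ (g * s) (g * t) = dΓ s t)
    (hΓproper : ∀ g : Γ, ∀ R : ℝ, {h : Γ | dΓ g h ≤ R}.Finite)
    (hΛzero : ∀ g h : Λ, dΛ g h = 0 ↔ g = h)
    (hΛsymm : ∀ g h : Λ, dΛ g h = dΛ h g)
    (hΛtri : ∀ g h k : Λ, dΛ g k ≤ dΛ g h + dΛ h k)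
    (hΛinv : ∀ g s t : Λ, dΛ (g * s) (g * t) = dΛ s t)
    (hΛproper : ∀ g : Λ, ∀ R : ℝ, {h : Λ | dΛ g h ≤ R}.Finite)
    (f : Γ → Λ) (hbij : Function.Bijective f) (hf : IsBornologous dΓ dΛ f)
    (hcoarse : ∃ g : Λ → Γ, IsBornologous dΛ dΓ g ∧ ∃ C : ℝ,
      (∀ y : Λ, dΛ (f (g y)) y ≤ C) ∧ (∀ x : Γ, dΓ (g (f x)) x ≤ C)) :
    ∀ p : ℕ, p.Prime → ∀ m : ℕ, 1 ≤ m →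
      ((∃ F : Subgroup Γ, ((F : Subgroup Γ) : Set Γ).Finite ∧ p ^ m ∣ Nat.card F) ↔
       (∃ E : Subgroup Λ, ((E : Subgroup Λ) : Set Λ).Finite ∧ p ^ m ∣ Nat.card E)) := by
  -- distances are nonnegative
  have hΓnonneg : ∀ g h : Γ, 0 ≤ dΓ g h := by
    intro g h
    have h1 : dΓ g g = 0 := (hΓzero g g).2 rfl
    have h2 := hΓtri g h g
    have h3 := hΓsymm g h
    linarith [hΓsymm h g, h2, h1]
  -- the inverse of f
  set e : Γ ≃ Λ := Equiv.ofBijective f hbij with he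
  have hfe : ∀ x : Γ, e x = f x := fun _ => rfl
  have hinvbij : Function.Bijective (e.symm : Λ → Γ) := e.symm.bijective
  have hinvborn : IsBornologous dΛ dΓ (e.symm : Λ → Γ) := by
    obtain ⟨g, hg, C, hC1, hC2⟩ := hcoarse
    have hC0 : 0 ≤ C := le_trans (hΓnonneg (g (f 1)) 1) (hC2 1)
    intro R hRpos
    obtain ⟨S', hS'pos, hS'⟩ := hg R hRpos
    refine ⟨C + S' + C, by linarith, ?_⟩
    intro y y' hyy'
    have hy : f (e.symm y) = y := e.apply_symm_apply y
    have hy' : f (e.symm y') = y' := e.apply_symm_apply y'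
    have h1 : dΓ (e.symm y) (g y) ≤ C := by
      rw [hΓsymm]
      have := hC2 (e.symm y); rwa [hy] at this
    have h2 : dΓ (g y) (g y') ≤ S' := hS' y y' hyy'
    have h3 : dΓ (g y') (e.symm y') ≤ C := by
      have := hC2 (e.symm y'); rwa [hy'] at this
    calc dΓ (e.symm y) (e.symm y') ≤ dΓ (e.symm y) (g y) + dΓ (g y) (e.symm y') :=
          hΓtri _ _ _
      _ ≤ dΓ (e.symm y) (g y) + (dΓ (g y) (g y') + dΓ (g y') (e.symm y')) := by
          linarith [hΓtri (g y) (g y') (e.symm y')]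
      _ ≤ C + S' + C := by linarith
  intro p hp m hm
  constructor
  · rintro ⟨F, hFfin, hFdvd⟩
    obtain ⟨E, hEfin, hEdvd⟩ :=
      key_lemma hΛlf dΓ dΛ hΓinv hΛinv hΛproper f hbij hf F hFfin
    exact ⟨E, hEfin, dvd_trans hFdvd hEdvd⟩
  · rintro ⟨E, hEfin, hEdvd⟩
    obtain ⟨F, hFfin, hFdvd⟩ :=
      key_lemma hΓlf dΛ dΓ hΛinv hΓinv hΓproper (e.symm : Λ → Γ) hinvbij hinvborn E hEfin
    exact ⟨F, hFfin, dvd_trans hEdvd hFdvd⟩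
end

section
/- Let Γ and Λ be countable locally finite groups with proper left-invariant metrics. If for every prime p and every m ≥ 1, p^m divides the order of some finite subgroup of Γ if and only if p^m divides the order of some finite subgroup of Λ (i.e., s(Γ) = s(Λ)), then Γ and Λ are bijectively coarsely equivalent. -/
open Set

private lemma nat_div_congr {a b k l : ℕ} (hab : a ∣ b) (h : k / a = l / a) : k / b = l / b := by
  rw [← Nat.mul_div_cancel' hab, ← Nat.div_div_eq_div_mul, ← Nat.div_div_eq_div_mul, h]

def GoodNum {G : Type*} [Group G] (C : ℕ → Subgroup G) (n : ℕ) (e : G → ℕ) : Prop :=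
  Set.BijOn e ((C n : Set G)) (Set.Iio (Nat.card (C n))) ∧
  ∀ m, m ≤ n → ∀ x ∈ C n, ∀ y ∈ C n,
    (x⁻¹ * y ∈ C m ↔ e x / Nat.card (C m) = e y / Nat.card (C m))

lemma goodnum_zero {G : Type*} [Group G] (C : ℕ → Subgroup G) (hbot : C 0 = ⊥) :
    GoodNum C 0 (fun _ => 0) := by
  have hcard : Nat.card (C 0) = 1 := by rw [hbot]; exact Subgroup.card_bot
  constructor
  · rw [hcard, hbot]
    refine ⟨fun x hx => by simp, fun x hx y hy _ => ?_, fun k hk => ?_⟩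
    · simp only [Subgroup.coe_bot, Set.mem_singleton_iff] at hx hy
      rw [hx, hy]
    · simp only [Set.mem_Iio, Nat.lt_one_iff] at hk
      exact ⟨1, by simp, hk.symm⟩
  · intro m hm x hx y hy
    obtain rfl : m = 0 := Nat.le_zero.mp hm
    have : x⁻¹ * y ∈ C 0 := mul_mem (inv_mem hx) hy
    simp [this, hcard]

lemma goodnum_step {G : Type*} [Group G] (C : ℕ → Subgroup G) (hmono : Monotone C)
    (hfin : ∀ n, ((C n : Subgroup G) : Set G).Finite) (n : ℕ) (e : G → ℕ)
    (he : GoodNum C n e) :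
    ∃ e' : G → ℕ, GoodNum C (n + 1) e' ∧ ∀ x ∈ C n, e' x = e x := by
  classical
  haveI hKfin : Finite (C (n+1)) := (hfin (n+1)).to_subtype
  haveI : Finite (C n) := (hfin n).to_subtype
  have hle : C n ≤ C (n+1) := hmono (Nat.le_succ n)
  set H : Subgroup (C (n+1)) := (C n).subgroupOf (C (n+1)) with hH
  haveI : Finite ((C (n+1)) ⧸ H) := Quotient.finite _
  have hcardH : Nat.card H = Nat.card (C n) :=
    Nat.card_congr (Subgroup.subgroupOfEquivOfLe hle).toEquiv
  have hcardQ : Nat.card (C (n+1)) = Nat.card ((C (n+1)) ⧸ H) * Nat.card (C n) := by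
    rw [← hcardH]; exact Subgroup.card_eq_card_quotient_mul_card_subgroup H
  have han : 0 < Nat.card (C n) := Nat.card_pos
  have hQpos : 0 < Nat.card ((C (n+1)) ⧸ H) := Nat.card_pos
  set c₀ : (C (n+1)) ⧸ H := QuotientGroup.mk 1 with hc₀
  obtain ⟨qe0⟩ : Nonempty ((C (n+1)) ⧸ H ≃ Fin (Nat.card ((C (n+1)) ⧸ H))) :=
    ⟨Nat.equivFinOfCardPos hQpos.ne'⟩
  set qe : (C (n+1)) ⧸ H ≃ Fin (Nat.card ((C (n+1)) ⧸ H)) :=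
    qe0.trans (Equiv.swap (qe0 c₀) ⟨0, hQpos⟩) with hqe
  have hqe0 : qe c₀ = ⟨0, hQpos⟩ := by simp [hqe, Equiv.swap_apply_left]
  set rep : (C (n+1)) ⧸ H → (C (n+1)) := fun c => if c = c₀ then 1 else c.out with hrepdef
  have hrep : ∀ c, QuotientGroup.mk (rep c) = c := by
    intro c
    by_cases h : c = c₀
    · subst h; simp [hrepdef, hc₀]
    · simp [hrepdef, h, QuotientGroup.out_eq']
  set e' : G → ℕ := fun x =>
    if h : x ∈ C (n+1) then
      Nat.card (C n) * (qe (QuotientGroup.mk ⟨x, h⟩)).val +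
        e ((((rep (QuotientGroup.mk ⟨x, h⟩))⁻¹ * ⟨x, h⟩ : C (n+1)) : G))
    else 0 with he'
  -- basic facts
  have hval : ∀ (x : G) (h : x ∈ C (n+1)),
      e' x = Nat.card (C n) * (qe (QuotientGroup.mk ⟨x, h⟩)).val +
        e ((((rep (QuotientGroup.mk ⟨x, h⟩))⁻¹ * ⟨x, h⟩ : C (n+1)) : G)) := by
    intro x h; simp [he', h]
  have humem : ∀ (x : G) (h : x ∈ C (n+1)),
      ((((rep (QuotientGroup.mk ⟨x, h⟩))⁻¹ * ⟨x, h⟩ : C (n+1)) : G)) ∈ C n := by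
    intro x h
    have h1 : QuotientGroup.mk (rep (QuotientGroup.mk (⟨x, h⟩ : C (n+1)))) =
        QuotientGroup.mk (⟨x, h⟩ : C (n+1)) := hrep _
    have h2 : (rep (QuotientGroup.mk (⟨x, h⟩ : C (n+1))))⁻¹ * ⟨x, h⟩ ∈ H :=
      QuotientGroup.eq.mp h1
    exact Subgroup.mem_subgroupOf.mp h2
  have hulte : ∀ (x : G) (h : x ∈ C (n+1)),
      e ((((rep (QuotientGroup.mk ⟨x, h⟩))⁻¹ * ⟨x, h⟩ : C (n+1)) : G)) < Nat.card (C n) := by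
    intro x h
    have := he.1.mapsTo (humem x h)
    simpa using this
  have hdiv : ∀ (x : G) (h : x ∈ C (n+1)),
      e' x / Nat.card (C n) = (qe (QuotientGroup.mk ⟨x, h⟩)).val := by
    intro x h
    rw [hval x h, Nat.mul_add_div han, Nat.div_eq_of_lt (hulte x h), Nat.add_zero]
  have hmod : ∀ (x : G) (h : x ∈ C (n+1)),
      e' x % Nat.card (C n) =
        e ((((rep (QuotientGroup.mk ⟨x, h⟩))⁻¹ * ⟨x, h⟩ : C (n+1)) : G)) := by
    intro x h
    rw [hval x h, Nat.mul_add_mod, Nat.mod_eq_of_lt (hulte x h)]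
  have hlt : ∀ (x : G) (h : x ∈ C (n+1)), e' x < Nat.card (C (n+1)) := by
    intro x h
    rw [hval x h, hcardQ]
    calc Nat.card (C n) * (qe (QuotientGroup.mk ⟨x, h⟩)).val +
        e ((((rep (QuotientGroup.mk ⟨x, h⟩))⁻¹ * ⟨x, h⟩ : C (n+1)) : G))
        < Nat.card (C n) * ((qe (QuotientGroup.mk ⟨x, h⟩)).val + 1) := by
          rw [Nat.mul_add, Nat.mul_one]; exact Nat.add_lt_add_left (hulte x h) _
      _ ≤ Nat.card (C n) * Nat.card ((C (n+1)) ⧸ H) := by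
          exact Nat.mul_le_mul_left _ (qe (QuotientGroup.mk ⟨x, h⟩)).isLt
      _ = Nat.card ((C (n+1)) ⧸ H) * Nat.card (C n) := Nat.mul_comm _ _
  refine ⟨e', ⟨⟨?_, ?_, ?_⟩, ?_⟩, ?_⟩
  · -- MapsTo
    intro x hx
    exact Set.mem_Iio.mpr (hlt x hx)
  · -- InjOn
    intro x hx y hy hxy
    have hq : (qe (QuotientGroup.mk ⟨x, hx⟩)).val = (qe (QuotientGroup.mk ⟨y, hy⟩)).val := by
      rw [← hdiv x hx, ← hdiv y hy, hxy]
    have hcq : QuotientGroup.mk (⟨x, hx⟩ : C (n+1)) = QuotientGroup.mk (⟨y, hy⟩ : C (n+1)) :=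
      qe.injective (Fin.val_injective hq)
    have hr : e ((((rep (QuotientGroup.mk ⟨x, hx⟩))⁻¹ * ⟨x, hx⟩ : C (n+1)) : G)) =
        e ((((rep (QuotientGroup.mk ⟨y, hy⟩))⁻¹ * ⟨y, hy⟩ : C (n+1)) : G)) := by
      rw [← hmod x hx, ← hmod y hy, hxy]
    have := he.1.injOn (humem x hx) (humem y hy) hr
    rw [hcq] at this
    have h2 : ((rep (QuotientGroup.mk ⟨y, hy⟩))⁻¹ * (⟨x, hx⟩ : C (n+1)) : C (n+1)) =
        (rep (QuotientGroup.mk ⟨y, hy⟩))⁻¹ * ⟨y, hy⟩ := by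
      exact_mod_cast Subtype.ext this
    have h3 : (⟨x, hx⟩ : C (n+1)) = ⟨y, hy⟩ := mul_left_cancel h2
    exact congrArg Subtype.val h3
  · -- SurjOn
    intro k hk
    have hk' : k < Nat.card ((C (n+1)) ⧸ H) * Nat.card (C n) := by
      rw [← hcardQ]; exact Set.mem_Iio.mp hk
    have hq : k / Nat.card (C n) < Nat.card ((C (n+1)) ⧸ H) :=
      Nat.div_lt_of_lt_mul (by rwa [Nat.mul_comm] at hk')
    set c : (C (n+1)) ⧸ H := qe.symm ⟨k / Nat.card (C n), hq⟩ with hc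
    obtain ⟨z, hz, hez⟩ := he.1.surjOn (Set.mem_Iio.mpr (Nat.mod_lt k han))
    set zK : C (n+1) := ⟨z, hle hz⟩ with hzK
    set xK : C (n+1) := rep c * zK with hxK
    refine ⟨(xK : G), xK.2, ?_⟩
    have hmk : QuotientGroup.mk (⟨(xK : G), xK.2⟩ : C (n+1)) = c := by
      have h5 : (QuotientGroup.mk (rep c * zK) : (C (n+1)) ⧸ H) = QuotientGroup.mk (rep c) := by
        apply QuotientGroup.eq.mpr
        simp only [mul_inv_rev, inv_mul_cancel_right]
        exact Subgroup.mem_subgroupOf.mpr (by simpa using inv_mem hz)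
      calc QuotientGroup.mk (⟨(xK : G), xK.2⟩ : C (n+1))
          = QuotientGroup.mk (rep c * zK) := rfl
        _ = QuotientGroup.mk (rep c) := h5
        _ = c := hrep c
    rw [hval _ xK.2, hmk]
    have h6 : (((rep c)⁻¹ * (⟨(xK : G), xK.2⟩ : C (n+1)) : C (n+1)) : G) = z := by
      have h7 : (⟨(xK : G), xK.2⟩ : C (n+1)) = xK := rfl
      rw [h7, hxK, inv_mul_cancel_left]
    rw [h6, hez, hc]
    simp only [Equiv.apply_symm_apply]
    exact Nat.div_add_mod k (Nat.card (C n))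
  · -- coset property
    intro m hm x hx y hy
    rcases Nat.lt_or_ge m (n+1) with hmn | hmn
    · have hmn' : m ≤ n := Nat.lt_succ_iff.mp hmn
      have hdvdmn : Nat.card (C m) ∣ Nat.card (C n) := Subgroup.card_dvd_of_le (hmono hmn')
      by_cases hxy : x⁻¹ * y ∈ C n
      · -- same coset of C n
        have hcq : (QuotientGroup.mk (⟨x, hx⟩ : C (n+1)) : (C (n+1)) ⧸ H) =
            QuotientGroup.mk (⟨y, hy⟩ : C (n+1)) := by
          apply QuotientGroup.eq.mpr
          exact Subgroup.mem_subgroupOf.mpr (by simpa using hxy)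
        have hux := humem x hx
        have huy := humem y hy
        have huxy : ((((rep (QuotientGroup.mk ⟨x, hx⟩))⁻¹ * ⟨x, hx⟩ : C (n+1)) : G))⁻¹ *
            ((((rep (QuotientGroup.mk ⟨y, hy⟩))⁻¹ * ⟨y, hy⟩ : C (n+1)) : G)) = x⁻¹ * y := by
          rw [hcq]
          push_cast
          group
        have hkey := he.2 m hmn' _ hux _ huy
        rw [huxy] at hkey
        rw [hkey, hval x hx, hval y hy, hcq]
        rw [Nat.add_div_of_dvd_right (Dvd.dvd.mul_right hdvdmn _),
            Nat.add_div_of_dvd_right (Dvd.dvd.mul_right hdvdmn _)]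
        constructor
        · intro h; rw [h]
        · intro h; exact Nat.add_left_cancel h
      · have hxym : x⁻¹ * y ∉ C m := fun h => hxy (hmono hmn' h)
        refine iff_of_false hxym ?_
        intro hcontra
        have h1 : e' x / Nat.card (C n) = e' y / Nat.card (C n) := nat_div_congr hdvdmn hcontra
        rw [hdiv x hx, hdiv y hy] at h1
        have hcq : QuotientGroup.mk (⟨x, hx⟩ : C (n+1)) = QuotientGroup.mk (⟨y, hy⟩ : C (n+1)) :=
          qe.injective (Fin.val_injective h1)
        have h2 : (⟨x, hx⟩ : C (n+1))⁻¹ * ⟨y, hy⟩ ∈ H := QuotientGroup.eq.mp hcq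
        exact hxy (by simpa using Subgroup.mem_subgroupOf.mp h2)
    · -- m = n+1
      obtain rfl : m = n + 1 := le_antisymm hm hmn
      have hxy : x⁻¹ * y ∈ C (n+1) := mul_mem (inv_mem hx) hy
      refine iff_of_true hxy ?_
      rw [Nat.div_eq_of_lt (hlt x hx), Nat.div_eq_of_lt (hlt y hy)]
  · -- extension
    intro x hx
    have hx1 : x ∈ C (n+1) := hle hx
    have hcq : (QuotientGroup.mk (⟨x, hx1⟩ : C (n+1)) : (C (n+1)) ⧸ H) = c₀ := by
      rw [hc₀]
      apply QuotientGroup.eq.mpr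
      exact Subgroup.mem_subgroupOf.mpr (by simpa using hx)
    rw [hval x hx1, hcq, hqe0]
    simp [hrepdef]

lemma exists_numbering {G : Type*} [Group G] (C : ℕ → Subgroup G) (hmono : Monotone C)
    (hfin : ∀ n, ((C n : Subgroup G) : Set G).Finite) (hbot : C 0 = ⊥)
    (hexh : ∀ x : G, ∃ n, x ∈ C n)
    (hunb : ∀ k : ℕ, ∃ n, k < Nat.card (C n)) :
    ∃ N : G → ℕ, Function.Bijective N ∧
      ∀ (n : ℕ) (x y : G),
        (x⁻¹ * y ∈ C n ↔ N x / Nat.card (C n) = N y / Nat.card (C n)) := by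
  classical
  let F : ∀ _ : ℕ, {e : G → ℕ // GoodNum C _ e} := fun n =>
    Nat.rec (motive := fun n => {e : G → ℕ // GoodNum C n e})
      ⟨fun _ => 0, goodnum_zero C hbot⟩
      (fun n p => ⟨Classical.choose (goodnum_step C hmono hfin n p.1 p.2),
        (Classical.choose_spec (goodnum_step C hmono hfin n p.1 p.2)).1⟩) n
  have hFs : ∀ n, ∀ x ∈ C n, (F (n+1)).1 x = (F n).1 x := fun n =>
    (Classical.choose_spec (goodnum_step C hmono hfin n (F n).1 (F n).2)).2
  have hcons : ∀ n m, n ≤ m → ∀ x ∈ C n, (F m).1 x = (F n).1 x := by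
    intro n m hnm
    induction m, hnm using Nat.le_induction with
    | base => intro x _; rfl
    | succ m hnm ih =>
      intro x hx
      rw [hFs m x (hmono hnm hx), ih x hx]
  let N : G → ℕ := fun x => (F (Nat.find (hexh x))).1 x
  have hNval : ∀ (x : G) (n : ℕ), x ∈ C n → N x = (F n).1 x := by
    intro x n hx
    have hl : x ∈ C (Nat.find (hexh x)) := Nat.find_spec (hexh x)
    rcases le_total (Nat.find (hexh x)) n with h | h
    · exact (hcons _ n h x hl).symm
    · exact hcons n _ h x hx
  refine ⟨N, ⟨?_, ?_⟩, ?_⟩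
  · intro x y hxy
    obtain ⟨nx, hnx⟩ := hexh x
    obtain ⟨ny, hny⟩ := hexh y
    have hx' : x ∈ C (max nx ny) := hmono (le_max_left _ _) hnx
    have hy' : y ∈ C (max nx ny) := hmono (le_max_right _ _) hny
    rw [hNval x _ hx', hNval y _ hy'] at hxy
    exact (F (max nx ny)).2.1.injOn hx' hy' hxy
  · intro k
    obtain ⟨n, hn⟩ := hunb k
    obtain ⟨x, hx, hex⟩ := (F n).2.1.surjOn (Set.mem_Iio.mpr hn)
    exact ⟨x, by rw [hNval x n hx]; exact hex⟩
  · intro n x y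
    obtain ⟨nx, hnx⟩ := hexh x
    obtain ⟨ny, hny⟩ := hexh y
    have hx' : x ∈ C (max n (max nx ny)) :=
      hmono (le_trans (le_max_left _ _) (le_max_right _ _)) hnx
    have hy' : y ∈ C (max n (max nx ny)) :=
      hmono (le_trans (le_max_right _ _) (le_max_right _ _)) hny
    rw [hNval x _ hx', hNval y _ hy']
    exact (F (max n (max nx ny))).2.2 n (le_max_left _ _) x hx' y hy'

lemma exists_fin_subgroup_dvd {G : Type*} [Group G]
    (hlf : ∀ S : Finset G, ((Subgroup.closure (S : Set G) : Subgroup G) : Set G).Finite) :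
    ∀ k : ℕ, 0 < k →
    (∀ p m : ℕ, p.Prime → 1 ≤ m → p ^ m ∣ k →
      ∃ F : Subgroup G, ((F : Subgroup G) : Set G).Finite ∧ p ^ m ∣ Nat.card F) →
    ∃ F : Subgroup G, ((F : Subgroup G) : Set G).Finite ∧ k ∣ Nat.card F := by
  intro k
  induction k using Nat.strong_induction_on with
  | _ k ih =>
    intro hk hreal
    by_cases hk1 : k = 1
    · refine ⟨⊥, by simp [Subgroup.coe_bot], ?_⟩
      rw [hk1]; exact one_dvd _
    · set p := k.minFac with hp
      have hpp : p.Prime := Nat.minFac_prime hk1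
      set m := k.factorization p with hmdef
      have hm1 : 1 ≤ m :=
        (hpp.factorization_pos_of_dvd hk.ne' (Nat.minFac_dvd k))
      set k' := k / p ^ m with hk'def
      have hord : p ^ m * k' = k := Nat.ordProj_mul_ordCompl_eq_self k p
      have hk'pos : 0 < k' := Nat.ordCompl_pos p hk.ne'
      have hk'lt : k' < k :=
        Nat.div_lt_self hk (Nat.one_lt_pow (by omega) hpp.one_lt)
      have hpnd : ¬ p ∣ k' := Nat.not_dvd_ordCompl hpp hk.ne'
      have hk'dvd : k' ∣ k := ⟨p ^ m, by rw [← hord, Nat.mul_comm]⟩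
      obtain ⟨F1, hF1fin, hF1⟩ := ih k' hk'lt hk'pos
        (fun q j hq hj hdvd => hreal q j hq hj (hdvd.trans hk'dvd))
      obtain ⟨F2, hF2fin, hF2⟩ := hreal p m hpp hm1 (Nat.ordProj_dvd k p)
      set T : Finset G := (hF1fin.union hF2fin).toFinset with hTdef
      have hT : (T : Set G) = (F1 : Set G) ∪ (F2 : Set G) := Set.Finite.coe_toFinset _
      refine ⟨Subgroup.closure (T : Set G), hlf T, ?_⟩
      have hle1 : F1 ≤ Subgroup.closure (T : Set G) := fun x hx =>
        Subgroup.subset_closure (by rw [hT]; exact Set.mem_union_left _ hx)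
      have hle2 : F2 ≤ Subgroup.closure (T : Set G) := fun x hx =>
        Subgroup.subset_closure (by rw [hT]; exact Set.mem_union_right _ hx)
      have hcop : Nat.Coprime (p ^ m) k' :=
        Nat.Coprime.pow_left m ((Nat.Prime.coprime_iff_not_dvd hpp).mpr hpnd)
      rw [← hord]
      exact hcop.mul_dvd_of_dvd_of_dvd (hF2.trans (Subgroup.card_dvd_of_le hle2))
        (hF1.trans (Subgroup.card_dvd_of_le hle1))

lemma subset_level {G : Type*} [Group G] (C : ℕ → Subgroup G) (hmono : Monotone C)
    {t : Set G} (ht : t.Finite) (h : ∀ x ∈ t, ∃ n, x ∈ C n) : ∃ n, t ⊆ (C n : Set G) := by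
  classical
  choose! g hg using h
  refine ⟨ht.toFinset.sup g, fun x hx => ?_⟩
  exact hmono (Finset.le_sup (ht.mem_toFinset.mpr hx)) (hg x hx)

lemma card_unbounded {G : Type*} [Group G] (hG : Infinite G) (C : ℕ → Subgroup G)
    (hmono : Monotone C) (hfin : ∀ n, ((C n : Subgroup G) : Set G).Finite)
    (hexh : ∀ x : G, ∃ n, x ∈ C n) :
    ∀ k : ℕ, ∃ n, k < Nat.card (C n) := by
  intro k
  obtain ⟨t, htsub, htfin, htcard⟩ :=
    (Set.infinite_univ (α := G)).exists_subset_ncard_eq (k + 1)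
  obtain ⟨n, hn⟩ := subset_level C hmono htfin (fun x _ => hexh x)
  refine ⟨n, ?_⟩
  have h1 : t.ncard ≤ (C n : Set G).ncard := Set.ncard_le_ncard hn (hfin n)
  have h2 : Nat.card (C n) = (C n : Set G).ncard := by
    rw [← Nat.card_coe_set_eq]
    exact Nat.card_congr (Equiv.subtypeEquivRight (fun x => Iff.rfl))
  omega

lemma exists_chains {Γ Λ : Type*} [Group Γ] [Group Λ] [Countable Γ] [Countable Λ]
    (hΓlf : ∀ S : Finset Γ, ((Subgroup.closure (S : Set Γ) : Subgroup Γ) : Set Γ).Finite)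
    (hΛlf : ∀ S : Finset Λ, ((Subgroup.closure (S : Set Λ) : Subgroup Λ) : Set Λ).Finite)
    (hsup : ∀ p : ℕ, p.Prime → ∀ m : ℕ, 1 ≤ m →
      ((∃ F : Subgroup Γ, ((F : Subgroup Γ) : Set Γ).Finite ∧ p ^ m ∣ Nat.card F) ↔
       (∃ E : Subgroup Λ, ((E : Subgroup Λ) : Set Λ).Finite ∧ p ^ m ∣ Nat.card E))) :
    ∃ (CΓ : ℕ → Subgroup Γ) (CΛ : ℕ → Subgroup Λ),
      Monotone CΓ ∧ Monotone CΛ ∧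
      (∀ n, ((CΓ n : Subgroup Γ) : Set Γ).Finite) ∧
      (∀ n, ((CΛ n : Subgroup Λ) : Set Λ).Finite) ∧
      CΓ 0 = ⊥ ∧ CΛ 0 = ⊥ ∧
      (∀ x : Γ, ∃ n, x ∈ CΓ n) ∧ (∀ y : Λ, ∃ n, y ∈ CΛ n) ∧
      (∀ n, Nat.card (CΓ n) ∣ Nat.card (CΛ n)) ∧
      (∀ n, Nat.card (CΛ n) ∣ Nat.card (CΓ (n + 1))) := by
  classical
  obtain ⟨gΓ, hgΓ⟩ := exists_surjective_nat Γ
  obtain ⟨gΛ, hgΛ⟩ := exists_surjective_nat Λ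
  have mkΓ : ∀ (B : Subgroup Λ), (B : Set Λ).Finite → ∀ (A : Subgroup Γ), (A : Set Γ).Finite →
      ∀ x : Γ, ∃ A' : Subgroup Γ,
        (A' : Set Γ).Finite ∧ A ≤ A' ∧ x ∈ A' ∧ Nat.card B ∣ Nat.card A' := by
    intro B hB A hA x
    haveI : Finite B := hB.to_subtype
    have hBpos : 0 < Nat.card B := Nat.card_pos
    have hreal : ∀ p m : ℕ, p.Prime → 1 ≤ m → p ^ m ∣ Nat.card B →
        ∃ F : Subgroup Γ, ((F : Subgroup Γ) : Set Γ).Finite ∧ p ^ m ∣ Nat.card F :=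
      fun p m hp hm hdvd => (hsup p hp m hm).mpr ⟨B, hB, hdvd⟩
    obtain ⟨F, hFfin, hFdvd⟩ := exists_fin_subgroup_dvd hΓlf (Nat.card B) hBpos hreal
    set T : Finset Γ := ((hA.union (Set.finite_singleton x)).union hFfin).toFinset with hT
    have hTcoe : (T : Set Γ) = ((A : Set Γ) ∪ {x}) ∪ (F : Set Γ) := Set.Finite.coe_toFinset _
    refine ⟨Subgroup.closure (T : Set Γ), hΓlf T, ?_, ?_, ?_⟩
    · exact fun a ha => Subgroup.subset_closure
        (by rw [hTcoe]; exact Set.mem_union_left _ (Set.mem_union_left _ ha))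
    · exact Subgroup.subset_closure
        (by rw [hTcoe]; exact Set.mem_union_left _ (Set.mem_union_right _ rfl))
    · exact hFdvd.trans (Subgroup.card_dvd_of_le (fun a ha =>
        Subgroup.subset_closure (by rw [hTcoe]; exact Set.mem_union_right _ ha)))
  have mkΛ : ∀ (A : Subgroup Γ), (A : Set Γ).Finite → ∀ (B : Subgroup Λ), (B : Set Λ).Finite →
      ∀ y : Λ, ∃ B' : Subgroup Λ,
        (B' : Set Λ).Finite ∧ B ≤ B' ∧ y ∈ B' ∧ Nat.card A ∣ Nat.card B' := by
    intro A hA B hB y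
    haveI : Finite A := hA.to_subtype
    have hApos : 0 < Nat.card A := Nat.card_pos
    have hreal : ∀ p m : ℕ, p.Prime → 1 ≤ m → p ^ m ∣ Nat.card A →
        ∃ F : Subgroup Λ, ((F : Subgroup Λ) : Set Λ).Finite ∧ p ^ m ∣ Nat.card F :=
      fun p m hp hm hdvd => (hsup p hp m hm).mp ⟨A, hA, hdvd⟩
    obtain ⟨F, hFfin, hFdvd⟩ := exists_fin_subgroup_dvd hΛlf (Nat.card A) hApos hreal
    set T : Finset Λ := ((hB.union (Set.finite_singleton y)).union hFfin).toFinset with hT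
    have hTcoe : (T : Set Λ) = ((B : Set Λ) ∪ {y}) ∪ (F : Set Λ) := Set.Finite.coe_toFinset _
    refine ⟨Subgroup.closure (T : Set Λ), hΛlf T, ?_, ?_, ?_⟩
    · exact fun a ha => Subgroup.subset_closure
        (by rw [hTcoe]; exact Set.mem_union_left _ (Set.mem_union_left _ ha))
    · exact Subgroup.subset_closure
        (by rw [hTcoe]; exact Set.mem_union_left _ (Set.mem_union_right _ rfl))
    · exact hFdvd.trans (Subgroup.card_dvd_of_le (fun a ha =>
        Subgroup.subset_closure (by rw [hTcoe]; exact Set.mem_union_right _ ha)))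
  have stepEx : ∀ (A : Subgroup Γ) (B : Subgroup Λ), (A : Set Γ).Finite → (B : Set Λ).Finite →
      ∀ n : ℕ, ∃ AB' : Subgroup Γ × Subgroup Λ,
        ((AB'.1 : Set Γ).Finite ∧ (AB'.2 : Set Λ).Finite) ∧
        A ≤ AB'.1 ∧ B ≤ AB'.2 ∧ gΓ n ∈ AB'.1 ∧ gΛ n ∈ AB'.2 ∧
        Nat.card B ∣ Nat.card AB'.1 ∧ Nat.card AB'.1 ∣ Nat.card AB'.2 := by
    intro A B hA hB n
    obtain ⟨A', hA'fin, hAA', hgA', hdvd1⟩ := mkΓ B hB A hA (gΓ n)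
    obtain ⟨B', hB'fin, hBB', hgB', hdvd2⟩ := mkΛ A' hA'fin B hB (gΛ n)
    exact ⟨(A', B'), ⟨hA'fin, hB'fin⟩, hAA', hBB', hgA', hgB', hdvd1, hdvd2⟩
  have hbotΓ : ((⊥ : Subgroup Γ) : Set Γ).Finite := by
    rw [Subgroup.coe_bot]; exact Set.finite_singleton 1
  have hbotΛ : ((⊥ : Subgroup Λ) : Set Λ).Finite := by
    rw [Subgroup.coe_bot]; exact Set.finite_singleton 1
  let chain : ∀ _ : ℕ, {AB : Subgroup Γ × Subgroup Λ //
      (AB.1 : Set Γ).Finite ∧ (AB.2 : Set Λ).Finite} := fun n =>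
    Nat.rec (motive := fun _ => {AB : Subgroup Γ × Subgroup Λ //
        (AB.1 : Set Γ).Finite ∧ (AB.2 : Set Λ).Finite})
      ⟨(⊥, ⊥), hbotΓ, hbotΛ⟩
      (fun n p => ⟨Classical.choose (stepEx p.1.1 p.1.2 p.2.1 p.2.2 n),
        (Classical.choose_spec (stepEx p.1.1 p.1.2 p.2.1 p.2.2 n)).1⟩) n
  have hstep : ∀ n,
      (chain n).1.1 ≤ (chain (n+1)).1.1 ∧ (chain n).1.2 ≤ (chain (n+1)).1.2 ∧
      gΓ n ∈ (chain (n+1)).1.1 ∧ gΛ n ∈ (chain (n+1)).1.2 ∧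
      Nat.card (chain n).1.2 ∣ Nat.card (chain (n+1)).1.1 ∧
      Nat.card (chain (n+1)).1.1 ∣ Nat.card (chain (n+1)).1.2 := fun n =>
    (Classical.choose_spec (stepEx (chain n).1.1 (chain n).1.2 (chain n).2.1 (chain n).2.2 n)).2
  refine ⟨fun n => (chain n).1.1, fun n => (chain n).1.2,
    monotone_nat_of_le_succ (fun n => (hstep n).1),
    monotone_nat_of_le_succ (fun n => (hstep n).2.1),
    fun n => (chain n).2.1, fun n => (chain n).2.2, rfl, rfl,
    ?_, ?_, ?_, fun n => (hstep n).2.2.2.2.1⟩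
  · intro x
    obtain ⟨n, rfl⟩ := hgΓ x
    exact ⟨n + 1, (hstep n).2.2.1⟩
  · intro y
    obtain ⟨n, rfl⟩ := hgΛ y
    exact ⟨n + 1, (hstep n).2.2.2.1⟩
  · intro n
    cases n with
    | zero =>
      have h1 : Nat.card ((⊥ : Subgroup Γ)) = 1 := Subgroup.card_bot
      have h2 : Nat.card ((⊥ : Subgroup Λ)) = 1 := Subgroup.card_bot
      show Nat.card ((⊥ : Subgroup Γ) : Subgroup Γ) ∣ _
      rw [h1]; exact one_dvd _
    | succ n => exact (hstep n).2.2.2.2.2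


/-- If two countable locally finite groups with proper left-invariant metrics have the same
supernatural number, then they are bijectively coarsely equivalent: there is a bijection
which is bornologous and whose inverse is bornologous. -/
theorem stmt_9 (Γ Λ : Type*) [Group Γ] [Group Λ] [Countable Γ] [Countable Λ]
    (hΓlf : ∀ S : Finset Γ, ((Subgroup.closure (S : Set Γ) : Subgroup Γ) : Set Γ).Finite)
    (hΛlf : ∀ S : Finset Λ, ((Subgroup.closure (S : Set Λ) : Subgroup Λ) : Set Λ).Finite)
    (dΓ : Γ → Γ → ℝ) (dΛ : Λ → Λ → ℝ)
    (hΓzero : ∀ g h : Γ, dΓ g h = 0 ↔ g = h)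
    (hΓsymm : ∀ g h : Γ, dΓ g h = dΓ h g)
    (hΓtri : ∀ g h k : Γ, dΓ g k ≤ dΓ g h + dΓ h k)
    (hΓinv : ∀ g s t : Γ, dΓ (g * s) (g * t) = dΓ s t)
    (hΓproper : ∀ g : Γ, ∀ R : ℝ, {h : Γ | dΓ g h ≤ R}.Finite)
    (hΛzero : ∀ g h : Λ, dΛ g h = 0 ↔ g = h)
    (hΛsymm : ∀ g h : Λ, dΛ g h = dΛ h g)
    (hΛtri : ∀ g h k : Λ, dΛ g k ≤ dΛ g h + dΛ h k)
    (hΛinv : ∀ g s t : Λ, dΛ (g * s) (g * t) = dΛ s t)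
    (hΛproper : ∀ g : Λ, ∀ R : ℝ, {h : Λ | dΛ g h ≤ R}.Finite)
    (hsup : ∀ p : ℕ, p.Prime → ∀ m : ℕ, 1 ≤ m →
      ((∃ F : Subgroup Γ, ((F : Subgroup Γ) : Set Γ).Finite ∧ p ^ m ∣ Nat.card F) ↔
       (∃ E : Subgroup Λ, ((E : Subgroup Λ) : Set Λ).Finite ∧ p ^ m ∣ Nat.card E))) :
    ∃ f : Γ → Λ, Function.Bijective f ∧ IsBornologous dΓ dΛ f ∧
      (∀ R > (0 : ℝ), ∃ S > (0 : ℝ), ∀ x x' : Γ, dΛ (f x) (f x') ≤ R → dΓ x x' ≤ S) := by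
  classical
  obtain ⟨CΓ, CΛ, hmΓ, hmΛ, hfΓ, hfΛ, hbΓ, hbΛ, hexΓ, hexΛ, hdvd1, hdvd2⟩ :=
    exists_chains hΓlf hΛlf hsup
  have hinvΓ : ∀ x x' : Γ, dΓ 1 (x⁻¹ * x') = dΓ x x' := by
    intro x x'
    have h := hΓinv x 1 (x⁻¹ * x')
    rw [mul_one, mul_inv_cancel_left] at h
    exact h.symm
  have hinvΛ : ∀ y y' : Λ, dΛ 1 (y⁻¹ * y') = dΛ y y' := by
    intro y y'
    have h := hΛinv y 1 (y⁻¹ * y')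
    rw [mul_one, mul_inv_cancel_left] at h
    exact h.symm
  by_cases hGfin : Finite Γ
  · -- finite case
    haveI := hGfin
    have hcardΓpos : 0 < Nat.card Γ := Nat.card_pos
    haveI hLfin : Finite Λ := by
      by_contra hL
      haveI : Infinite Λ := not_finite_iff_infinite.mp hL
      obtain ⟨n, hn⟩ := card_unbounded ‹Infinite Λ› CΛ hmΛ hfΛ hexΛ (Nat.card Γ)
      have h1 : Nat.card (CΛ n) ∣ Nat.card Γ := by
        refine (hdvd2 n).trans ?_
        have := Subgroup.card_dvd_of_le (le_top (a := CΓ (n+1)))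
        rwa [Subgroup.card_top] at this
      exact absurd hn (not_lt.mpr (Nat.le_of_dvd hcardΓpos h1))
    have hcard : Nat.card Γ = Nat.card Λ := by
      obtain ⟨n, hn⟩ := subset_level CΓ hmΓ Set.finite_univ (fun x _ => hexΓ x)
      obtain ⟨m, hm⟩ := subset_level CΛ hmΛ Set.finite_univ (fun y _ => hexΛ y)
      have hΓtop : ∀ q, n ≤ q → CΓ q = ⊤ := by
        intro q hq
        rw [eq_top_iff]
        exact fun x _ => hmΓ hq (hn (Set.mem_univ x))
      have hΛtop : ∀ q, m ≤ q → CΛ q = ⊤ := by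
        intro q hq
        rw [eq_top_iff]
        exact fun y _ => hmΛ hq (hm (Set.mem_univ y))
      set q := max n m
      have h1 := hdvd1 (q + 1)
      have h2 := hdvd2 q
      rw [hΓtop (q+1) (le_trans (le_max_left _ _) (Nat.le_succ _)),
        hΛtop (q+1) (le_trans (le_max_right _ _) (Nat.le_succ _)),
        Subgroup.card_top, Subgroup.card_top] at h1
      rw [hΓtop (q+1) (le_trans (le_max_left _ _) (Nat.le_succ _)),
        hΛtop q (le_max_right _ _), Subgroup.card_top, Subgroup.card_top] at h2
      exact Nat.dvd_antisymm h1 h2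
    obtain ⟨e⟩ : Nonempty (Γ ≃ Λ) := Finite.card_eq.mp hcard
    have hboundΛ : ∃ S > (0:ℝ), ∀ y y' : Λ, dΛ y y' ≤ S := by
      have hfinr : (Set.range (fun p : Λ × Λ => dΛ p.1 p.2)).Finite := Set.finite_range _
      obtain ⟨S₀, hS₀⟩ := hfinr.bddAbove
      exact ⟨max S₀ 1, lt_of_lt_of_le one_pos (le_max_right _ _),
        fun y y' => le_trans (hS₀ ⟨(y, y'), rfl⟩) (le_max_left _ _)⟩
    have hboundΓ : ∃ S > (0:ℝ), ∀ x x' : Γ, dΓ x x' ≤ S := by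
      have hfinr : (Set.range (fun p : Γ × Γ => dΓ p.1 p.2)).Finite := Set.finite_range _
      obtain ⟨S₀, hS₀⟩ := hfinr.bddAbove
      exact ⟨max S₀ 1, lt_of_lt_of_le one_pos (le_max_right _ _),
        fun x x' => le_trans (hS₀ ⟨(x, x'), rfl⟩) (le_max_left _ _)⟩
    obtain ⟨SΛ, hSΛpos, hSΛ⟩ := hboundΛ
    obtain ⟨SΓ, hSΓpos, hSΓ⟩ := hboundΓ
    exact ⟨e, e.bijective, fun R _ => ⟨SΛ, hSΛpos, fun x x' _ => hSΛ _ _⟩,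
      fun R _ => ⟨SΓ, hSΓpos, fun x x' _ => hSΓ _ _⟩⟩
  · -- infinite case
    haveI : Infinite Γ := not_finite_iff_infinite.mp hGfin
    have hunbΓ := card_unbounded ‹Infinite Γ› CΓ hmΓ hfΓ hexΓ
    have hunbΛ : ∀ k : ℕ, ∃ n, k < Nat.card (CΛ n) := by
      intro k
      obtain ⟨n, hn⟩ := hunbΓ k
      haveI : Finite (CΛ n) := (hfΛ n).to_subtype
      exact ⟨n, lt_of_lt_of_le hn (Nat.le_of_dvd Nat.card_pos (hdvd1 n))⟩
    obtain ⟨N, hNbij, hNprop⟩ := exists_numbering CΓ hmΓ hfΓ hbΓ hexΓ hunbΓ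
    obtain ⟨M, hMbij, hMprop⟩ := exists_numbering CΛ hmΛ hfΛ hbΛ hexΛ hunbΛ
    let eM : Λ ≃ ℕ := Equiv.ofBijective M hMbij
    refine ⟨fun x => eM.symm (N x), (eM.symm.bijective).comp hNbij, ?_, ?_⟩
    · -- bornologous
      intro R hR
      obtain ⟨n, hn⟩ := subset_level CΓ hmΓ (hΓproper 1 R) (fun x _ => hexΓ x)
      have hbnd : ∃ S > (0:ℝ), ∀ l ∈ CΛ n, dΛ 1 l ≤ S := by
        have hfinr : ((fun l => dΛ 1 l) '' (CΛ n : Set Λ)).Finite := (hfΛ n).image _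
        obtain ⟨S₀, hS₀⟩ := hfinr.bddAbove
        exact ⟨max S₀ 1, lt_of_lt_of_le one_pos (le_max_right _ _),
          fun l hl => le_trans (hS₀ ⟨l, hl, rfl⟩) (le_max_left _ _)⟩
      obtain ⟨S, hSpos, hS⟩ := hbnd
      refine ⟨S, hSpos, fun x x' hxx' => ?_⟩
      have hmem : x⁻¹ * x' ∈ CΓ n := hn (by
        show dΓ 1 (x⁻¹ * x') ≤ R
        rw [hinvΓ]; exact hxx')
      have h1 := (hNprop n x x').mp hmem
      have h2 : N x / Nat.card (CΛ n) = N x' / Nat.card (CΛ n) :=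
        nat_div_congr (hdvd1 n) h1
      have h3 : M (eM.symm (N x)) = N x := eM.apply_symm_apply (N x)
      have h4 : M (eM.symm (N x')) = N x' := eM.apply_symm_apply (N x')
      have h5 : (eM.symm (N x))⁻¹ * eM.symm (N x') ∈ CΛ n := by
        apply (hMprop n _ _).mpr
        rw [h3, h4]; exact h2
      rw [← hinvΛ]
      exact hS _ h5
    · -- inverse bornologous
      intro R hR
      obtain ⟨n, hn⟩ := subset_level CΛ hmΛ (hΛproper 1 R) (fun y _ => hexΛ y)
      have hbnd : ∃ S > (0:ℝ), ∀ l ∈ CΓ (n+1), dΓ 1 l ≤ S := by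
        have hfinr : ((fun l => dΓ 1 l) '' (CΓ (n+1) : Set Γ)).Finite := (hfΓ (n+1)).image _
        obtain ⟨S₀, hS₀⟩ := hfinr.bddAbove
        exact ⟨max S₀ 1, lt_of_lt_of_le one_pos (le_max_right _ _),
          fun l hl => le_trans (hS₀ ⟨l, hl, rfl⟩) (le_max_left _ _)⟩
      obtain ⟨S, hSpos, hS⟩ := hbnd
      refine ⟨S, hSpos, fun x x' hxx' => ?_⟩
      have hmem : (eM.symm (N x))⁻¹ * eM.symm (N x') ∈ CΛ n := hn (by
        show dΛ 1 _ ≤ R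
        rw [hinvΛ]; exact hxx')
      have h1 := (hMprop n _ _).mp hmem
      have h3 : M (eM.symm (N x)) = N x := eM.apply_symm_apply (N x)
      have h4 : M (eM.symm (N x')) = N x' := eM.apply_symm_apply (N x')
      rw [h3, h4] at h1
      have h2 : N x / Nat.card (CΓ (n+1)) = N x' / Nat.card (CΓ (n+1)) :=
        nat_div_congr (hdvd2 n) h1
      have h5 : x⁻¹ * x' ∈ CΓ (n+1) := (hNprop (n+1) x x').mpr h2
      rw [← hinvΓ]
      exact hS _ h5
end

section
/- Let Γ and Λ be countable locally finite groups given by increasing exhausting sequences of finite subgroups {Γₖ} and {Λₖ} with Γ₀ = {e}, Λ₀ = {e}, such that |Γₖ| divides |Λₖ| and |Λₖ| divides |Γ_{k+1}| for all k. Then there exists a bijection φ: Γ → Λ such that for every ℓ ≤ k, φ maps elements of Γₖ lying in the same left coset of Γ_ℓ into the same left coset of Λ_ℓ, and φ⁻¹ maps elements of Λₖ in the same left coset of Λ_ℓ into the same left coset of Γ_{ℓ+1}. -/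
open Function Set

namespace Stmt10Aux

lemma digit_eq_iff {a b r s d : ℕ} (hr : r < d) (hs : s < d) :
    a * d + r = b * d + s ↔ a = b ∧ r = s := by
  have hd : 0 < d := lt_of_le_of_lt (Nat.zero_le r) hr
  constructor
  · intro h
    have h1 : (a * d + r) / d = a := by
      rw [add_comm, Nat.add_mul_div_right _ _ hd, Nat.div_eq_of_lt hr, zero_add]
    have h2 : (b * d + s) / d = b := by
      rw [add_comm, Nat.add_mul_div_right _ _ hd, Nat.div_eq_of_lt hs, zero_add]
    have hab : a = b := by rw [← h1, ← h2, h]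
    subst hab
    exact ⟨rfl, Nat.add_left_cancel h⟩
  · rintro ⟨rfl, rfl⟩; rfl

variable {Γ : Type*} [Group Γ]

/-- Invariant for the recursive enumeration: `e` is injective on `G k`, maps it onto
`[0, |G k|)`, and for all `ℓ ≤ k` respects the left-coset block structure. -/
def EnumProp (G : ℕ → Subgroup Γ) (k : ℕ) (e : Γ → ℕ) : Prop :=
  Set.InjOn e (G k) ∧ e '' (G k) = Set.Iio (Nat.card (G k)) ∧
    ∀ ℓ, ℓ ≤ k → ∀ x ∈ G k, ∀ y ∈ G k,
      (x⁻¹ * y ∈ G ℓ ↔ e x / Nat.card (G ℓ) = e y / Nat.card (G ℓ))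

lemma enum_base (G : ℕ → Subgroup Γ) (hfin : ((G 0 : Set Γ)).Finite) :
    ∃ e : Γ → ℕ, EnumProp G 0 e := by
  classical
  haveI : Finite (G 0) := hfin.to_subtype
  let γ := Finite.equivFin (G 0)
  let e : Γ → ℕ := fun x => if h : x ∈ G 0 then (γ ⟨x, h⟩ : ℕ) else 0
  have hval : ∀ (x : Γ) (h : x ∈ G 0), e x = (γ ⟨x, h⟩ : ℕ) := fun x h => dif_pos h
  refine ⟨e, ?_, ?_, ?_⟩
  · intro x hx y hy hxy
    simp only [SetLike.mem_coe] at hx hy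
    rw [hval x hx, hval y hy] at hxy
    have := γ.injective (Fin.val_injective hxy)
    exact congrArg Subtype.val this
  · ext n
    constructor
    · rintro ⟨x, hx, rfl⟩
      simp only [SetLike.mem_coe] at hx
      rw [hval x hx]
      exact (γ ⟨x, hx⟩).isLt
    · intro hn
      refine ⟨(γ.symm ⟨n, hn⟩ : G 0), (γ.symm ⟨n, hn⟩).2, ?_⟩
      rw [hval _ (γ.symm ⟨n, hn⟩).2]
      simp
  · intro ℓ hℓ x hx y hy
    interval_cases ℓ
    constructor
    · intro _
      rw [hval x hx, hval y hy, Nat.div_eq_of_lt (γ ⟨x, hx⟩).isLt,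
        Nat.div_eq_of_lt (γ ⟨y, hy⟩).isLt]
    · intro _
      exact mul_mem (inv_mem hx) hy

lemma enum_step (G : ℕ → Subgroup Γ) (hmono : Monotone G)
    (hfin : ∀ k, ((G k : Set Γ)).Finite) (k : ℕ) (e : Γ → ℕ)
    (he : EnumProp G k e) :
    ∃ e' : Γ → ℕ, EnumProp G (k + 1) e' ∧ ∀ x ∈ G k, e' x = e x := by
  classical
  obtain ⟨heinj, heim, heblock⟩ := he
  haveI : Finite (G k) := (hfin k).to_subtype
  haveI : Finite (G (k + 1)) := (hfin (k + 1)).to_subtype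
  set K := G (k + 1) with hK
  have hle : G k ≤ K := hmono (Nat.le_succ k)
  set H' : Subgroup K := (G k).subgroupOf K with hH'
  set m : ℕ := Nat.card (G k) with hm
  set M : ℕ := Nat.card K with hM
  have hmpos : 0 < m := Nat.card_pos
  set Q := (↥K) ⧸ H' with hQdef
  set c : ℕ := Nat.card Q with hc
  have hcard : M = c * m := by
    rw [hM, hm, Subgroup.card_eq_card_quotient_mul_card_subgroup H']
    congr 1
    exact Nat.card_congr (Subgroup.subgroupOfEquivOfLe hle).toEquiv
  have hcpos : 0 < c := Nat.card_pos
  let q₁ : Q := ((1 : ↥K) : Q)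
  let γ : Q ≃ Fin c := Finite.equivFin Q
  let β : Q → ℕ := fun q => ((Equiv.swap (γ q₁) ⟨0, hcpos⟩) (γ q) : ℕ)
  have hβinj : Function.Injective β := fun a b hab =>
    γ.injective ((Equiv.swap _ _).injective (Fin.val_injective hab))
  have hβlt : ∀ q, β q < c := fun q => ((Equiv.swap (γ q₁) ⟨0, hcpos⟩) (γ q)).isLt
  have hβone : β q₁ = 0 := by simp [β, Equiv.swap_apply_left]
  -- section of the quotient map
  let σ : Q → ↥K := fun q => if q = q₁ then 1 else q.out
  have hσ : ∀ q : Q, ((σ q : ↥K) : Q) = q := by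
    intro q
    by_cases h : q = q₁
    · subst h; simp [σ]; rfl
    · simp only [σ, if_neg h]; exact Quotient.out_eq q
  have hσone : σ q₁ = 1 := by simp [σ]
  -- membership of offsets
  have hoffmem : ∀ x : ↥K, ((σ (↑x : Q))⁻¹ * x : ↥K) ∈ H' := by
    intro x
    rw [← QuotientGroup.eq]
    exact hσ _
  have hoffG : ∀ x : ↥K, (((σ (↑x : Q))⁻¹ * x : ↥K) : Γ) ∈ G k := by
    intro x
    exact Subgroup.mem_subgroupOf.mp (hoffmem x)
  have hoffval : ∀ x : ↥K, (((σ (↑x : Q))⁻¹ * x : ↥K) : Γ)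
      = ((σ (↑x : Q) : ↥K) : Γ)⁻¹ * (x : Γ) := by intro x; simp
  have helt : ∀ z ∈ G k, e z < m := by
    intro z hz
    have : e z ∈ Set.Iio m := heim ▸ Set.mem_image_of_mem e hz
    exact this
  let off : ↥K → ℕ := fun x => e (((σ (↑x : Q))⁻¹ * x : ↥K) : Γ)
  have hofflt : ∀ x : ↥K, off x < m := fun x => helt _ (hoffG x)
  let e' : Γ → ℕ := fun x => if h : x ∈ K then
      β (↑(⟨x, h⟩ : ↥K) : Q) * m + off ⟨x, h⟩ else 0
  have he'val : ∀ (x : Γ) (h : x ∈ K),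
      e' x = β (↑(⟨x, h⟩ : ↥K) : Q) * m + off ⟨x, h⟩ := fun x h => dif_pos h
  -- same quotient class iff difference lies in `G k`
  have hclass : ∀ (x y : ↥K), ((↑x : Q) = ↑y) ↔ (x : Γ)⁻¹ * (y : Γ) ∈ G k := by
    intro x y
    rw [QuotientGroup.eq, Subgroup.mem_subgroupOf]
    simp
  -- extension property
  have hext : ∀ x ∈ G k, e' x = e x := by
    intro x hx
    have hxK : x ∈ K := hle hx
    have hq1 : (↑(⟨x, hxK⟩ : ↥K) : Q) = q₁ := by
      have : (↑(⟨x, hxK⟩ : ↥K) : Q) = ((1 : ↥K) : Q) := by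
        rw [hclass]
        simpa using inv_mem hx
      exact this
    rw [he'val x hxK, hq1, hβone, zero_mul, zero_add]
    simp only [off, hq1, hσone]
    simp
  -- value of the division by m
  have hdiv : ∀ (x : Γ) (h : x ∈ K), e' x / m = β (↑(⟨x, h⟩ : ↥K) : Q) := by
    intro x h
    rw [he'val x h, add_comm, Nat.add_mul_div_right _ _ hmpos,
      Nat.div_eq_of_lt (hofflt _), zero_add]
  have he'lt : ∀ (x : Γ), x ∈ K → e' x < M := by
    intro x h
    rw [he'val x h, hcard]
    calc β (↑(⟨x, h⟩ : ↥K) : Q) * m + off ⟨x, h⟩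
        < β (↑(⟨x, h⟩ : ↥K) : Q) * m + m := Nat.add_lt_add_left (hofflt _) _
      _ = (β (↑(⟨x, h⟩ : ↥K) : Q) + 1) * m := by ring
      _ ≤ c * m := Nat.mul_le_mul_right m (hβlt _)
  -- injectivity
  have hinj : Set.InjOn e' (K : Set Γ) := by
    intro x hx y hy hxy
    simp only [SetLike.mem_coe] at hx hy
    rw [he'val x hx, he'val y hy] at hxy
    obtain ⟨hβeq, hoffeq⟩ := (digit_eq_iff (hofflt _) (hofflt _)).mp hxy
    have hq : (↑(⟨x, hx⟩ : ↥K) : Q) = (↑(⟨y, hy⟩ : ↥K) : Q) := hβinj hβeq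
    have h2 := heinj (hoffG ⟨x, hx⟩) (hoffG ⟨y, hy⟩) hoffeq
    rw [hoffval, hoffval, hq] at h2
    have h3 := mul_left_cancel h2
    simpa using h3
  refine ⟨e', ⟨hinj, ?_, ?_⟩, hext⟩
  · -- image
    apply Set.eq_of_subset_of_ncard_le
    · rintro n ⟨x, hx, rfl⟩
      exact he'lt x hx
    · have h1 : (Set.Iio M).ncard = M := by
        rw [← Finset.coe_range, Set.ncard_coe_finset, Finset.card_range]
      have h2 : (e' '' (K : Set Γ)).ncard = M := by
        rw [Set.ncard_image_of_injOn hinj, ← Nat.card_coe_set_eq,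
          SetLike.coe_sort_coe]
      rw [h1, h2]
    · exact Set.finite_Iio M
  · -- block property
    intro ℓ hℓ x hx y hy
    rcases Nat.lt_or_ge ℓ (k + 1) with hℓk | hℓk
    · -- case ℓ ≤ k
      have hℓk : ℓ ≤ k := Nat.lt_succ_iff.mp hℓk
      set mℓ : ℕ := Nat.card (G ℓ) with hmℓ
      have hmℓpos : 0 < mℓ := by
        haveI : Finite (G ℓ) := (hfin ℓ).to_subtype
        exact Nat.card_pos
      obtain ⟨d, hd⟩ : mℓ ∣ m := Subgroup.card_dvd_of_le (hmono hℓk)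
      have hsplit : ∀ (z : Γ) (hz : z ∈ K),
          e' z / mℓ = β (↑(⟨z, hz⟩ : ↥K) : Q) * d + off ⟨z, hz⟩ / mℓ := by
        intro z hz
        rw [he'val z hz, hd, show β (↑(⟨z, hz⟩ : ↥K) : Q) * (mℓ * d)
            = (β (↑(⟨z, hz⟩ : ↥K) : Q) * d) * mℓ by ring, add_comm,
          Nat.add_mul_div_right _ _ hmℓpos, add_comm]
      have hofflt' : ∀ z : ↥K, off z / mℓ < d := by
        intro z
        have h1 : off z < m := hofflt z
        have h2 := Nat.div_lt_div_of_lt_of_dvd (b := m) (d := mℓ) ⟨d, hd⟩ h1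
        rwa [hd, Nat.mul_div_cancel_left _ hmℓpos] at h2
      rw [hsplit x hx, hsplit y hy, digit_eq_iff (hofflt' _) (hofflt' _)]
      constructor
      · intro hxy
        have hxyk : x⁻¹ * y ∈ G k := hmono hℓk hxy
        have hq : (↑(⟨x, hx⟩ : ↥K) : Q) = (↑(⟨y, hy⟩ : ↥K) : Q) := by
          rw [hclass]; simpa using hxyk
        have hoffrel : (((σ (↑(⟨x, hx⟩ : ↥K) : Q))⁻¹ * ⟨x, hx⟩ : ↥K) : Γ)⁻¹
            * (((σ (↑(⟨y, hy⟩ : ↥K) : Q))⁻¹ * ⟨y, hy⟩ : ↥K) : Γ) = x⁻¹ * y := by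
          rw [hoffval, hoffval, hq]
          simp only [Subtype.coe_mk]
          group
        have hoffblock := (heblock ℓ hℓk _ (hoffG ⟨x, hx⟩) _ (hoffG ⟨y, hy⟩)).mp
          (by rw [hoffrel]; exact hxy)
        exact ⟨by rw [hq], hoffblock⟩
      · rintro ⟨hβeq, hoffdiv⟩
        have hq : (↑(⟨x, hx⟩ : ↥K) : Q) = (↑(⟨y, hy⟩ : ↥K) : Q) := hβinj hβeq
        have h2 := (heblock ℓ hℓk _ (hoffG ⟨x, hx⟩) _ (hoffG ⟨y, hy⟩)).mpr hoffdiv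
        rw [hoffval, hoffval, hq] at h2
        have hrel : (((σ (↑(⟨y, hy⟩ : ↥K) : Q) : ↥K) : Γ)⁻¹ * (↑(⟨x, hx⟩ : ↥K) : Γ))⁻¹
            * (((σ (↑(⟨y, hy⟩ : ↥K) : Q) : ↥K) : Γ)⁻¹ * (↑(⟨y, hy⟩ : ↥K) : Γ))
            = x⁻¹ * y := by
          simp only [Subtype.coe_mk]
          group
        rwa [hrel] at h2
    · -- case ℓ = k + 1
      have hℓ' : ℓ = k + 1 := le_antisymm hℓ hℓk
      subst hℓ'
      constructor
      · intro _
        rw [Nat.div_eq_of_lt (he'lt x hx), Nat.div_eq_of_lt (he'lt y hy)]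
      · intro _
        exact mul_mem (inv_mem hx) hy

end Stmt10Aux

namespace Stmt10Aux

variable {Γ : Type*} [Group Γ]

lemma exists_enum (G : ℕ → Subgroup Γ) (hmono : Monotone G)
    (hfin : ∀ k, ((G k : Set Γ)).Finite)
    (hun : (⋃ k, ((G k : Subgroup Γ) : Set Γ)) = Set.univ) :
    ∃ e : Γ → ℕ, Function.Injective e ∧
      (Set.range e = ⋃ k, Set.Iio (Nat.card (G k))) ∧
      ∀ ℓ (x y : Γ), (x⁻¹ * y ∈ G ℓ ↔ e x / Nat.card (G ℓ) = e y / Nat.card (G ℓ)) := by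
  classical
  obtain ⟨e0, he0⟩ := enum_base G (hfin 0)
  choose st hst1 hst2 using enum_step G hmono hfin
  let E : ∀ k : ℕ, {e : Γ → ℕ // EnumProp G k e} := fun k =>
    Nat.rec ⟨e0, he0⟩ (fun k ih => ⟨st k ih.1 ih.2, hst1 k ih.1 ih.2⟩) k
  have hcomp : ∀ k, ∀ x ∈ G k, (E (k + 1)).1 x = (E k).1 x := fun k =>
    hst2 k (E k).1 (E k).2
  have hEle : ∀ k j, k ≤ j → ∀ x ∈ G k, (E j).1 x = (E k).1 x := by
    intro k j hkj
    induction j, hkj using Nat.le_induction with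
    | base => intro x _; rfl
    | succ j hkj ih =>
      intro x hx
      rw [hcomp j x (hmono hkj hx), ih x hx]
  have hex : ∀ x : Γ, ∃ k, x ∈ G k := by
    intro x
    have : x ∈ ⋃ k, ((G k : Subgroup Γ) : Set Γ) := hun ▸ Set.mem_univ x
    simpa using this
  choose κ hκ using hex
  let e : Γ → ℕ := fun x => (E (κ x)).1 x
  have heval : ∀ (x : Γ) (j : ℕ), x ∈ G j → e x = (E j).1 x := by
    intro x j hj
    have h1 : e x = (E (max (κ x) j)).1 x :=
      (hEle (κ x) (max (κ x) j) (le_max_left _ _) x (hκ x)).symm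
    have h2 : (E j).1 x = (E (max (κ x) j)).1 x :=
      (hEle j (max (κ x) j) (le_max_right _ _) x hj).symm
    rw [h1, h2]
  refine ⟨e, ?_, ?_, ?_⟩
  · intro x y hxy
    set j := max (κ x) (κ y) with hj
    have hxj : x ∈ G j := hmono (le_max_left _ _) (hκ x)
    have hyj : y ∈ G j := hmono (le_max_right _ _) (hκ y)
    rw [heval x j hxj, heval y j hyj] at hxy
    exact (E j).2.1 hxj hyj hxy
  · ext n
    simp only [Set.mem_range, Set.mem_iUnion, Set.mem_Iio]
    constructor
    · rintro ⟨x, rfl⟩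
      refine ⟨κ x, ?_⟩
      have : e x ∈ Set.Iio (Nat.card (G (κ x))) :=
        (E (κ x)).2.2.1 ▸ Set.mem_image_of_mem _ (hκ x)
      simpa [heval x (κ x) (hκ x)] using this
    · rintro ⟨j, hn⟩
      have : n ∈ (E j).1 '' (G j) := (E j).2.2.1 ▸ hn
      obtain ⟨x, hx, rfl⟩ := this
      exact ⟨x, heval x j hx⟩
  · intro ℓ x y
    set j := max ℓ (max (κ x) (κ y)) with hj
    have hxj : x ∈ G j := hmono (le_trans (le_max_left _ _) (le_max_right _ _)) (hκ x)
    have hyj : y ∈ G j := hmono (le_trans (le_max_right _ _) (le_max_right _ _)) (hκ y)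
    rw [heval x j hxj, heval y j hyj]
    exact (E j).2.2.2 ℓ (le_max_left _ _) x hxj y hyj

lemma div_trans {a b d D : ℕ} (hdD : d ∣ D) (h : a / d = b / d) : a / D = b / D := by
  obtain ⟨c, rfl⟩ := hdD
  rw [← Nat.div_div_eq_div_mul, ← Nat.div_div_eq_div_mul, h]

end Stmt10Aux

open Stmt10Aux in
/-- Given two countable locally finite groups exhausted by increasing sequences of finite
subgroups with the interlacing divisibility |Γₖ| ∣ |Λₖ| ∣ |Γ_{k+1}|, there is a bijection
φ : Γ → Λ respecting cosets: for ℓ ≤ k, elements of Γₖ in the same left coset of Γ_ℓ are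
sent into the same left coset of Λ_ℓ, and elements whose images lie in Λₖ and in the same
left coset of Λ_ℓ lie in the same left coset of Γ_{ℓ+1}. -/
theorem stmt_10 (Γ Λ : Type*) [Group Γ] [Group Λ] [Countable Γ] [Countable Λ]
    (G : ℕ → Subgroup Γ) (L : ℕ → Subgroup Λ)
    (hG0 : G 0 = ⊥) (hL0 : L 0 = ⊥) (hGmono : Monotone G) (hLmono : Monotone L)
    (hGfin : ∀ k, ((G k : Subgroup Γ) : Set Γ).Finite)
    (hLfin : ∀ k, ((L k : Subgroup Λ) : Set Λ).Finite)
    (hGun : (⋃ k, ((G k : Subgroup Γ) : Set Γ)) = Set.univ)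
    (hLun : (⋃ k, ((L k : Subgroup Λ) : Set Λ)) = Set.univ)
    (hdvd1 : ∀ k, Nat.card (G k) ∣ Nat.card (L k))
    (hdvd2 : ∀ k, Nat.card (L k) ∣ Nat.card (G (k + 1))) :
    ∃ φ : Γ → Λ, Function.Bijective φ ∧
      (∀ ℓ k : ℕ, ℓ ≤ k → ∀ x₁ x₂ : Γ, x₁ ∈ G k → x₂ ∈ G k →
        x₁⁻¹ * x₂ ∈ G ℓ → (φ x₁)⁻¹ * φ x₂ ∈ L ℓ) ∧
      (∀ ℓ k : ℕ, ℓ ≤ k → ∀ x₁ x₂ : Γ, φ x₁ ∈ L k → φ x₂ ∈ L k →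
        (φ x₁)⁻¹ * φ x₂ ∈ L ℓ → x₁⁻¹ * x₂ ∈ G (ℓ + 1)) := by
  classical
  obtain ⟨e, heinj, herange, heblock⟩ := exists_enum G hGmono hGfin hGun
  obtain ⟨f, hfinj, hfrange, hfblock⟩ := exists_enum L hLmono hLfin hLun
  have hranges : Set.range e = Set.range f := by
    rw [herange, hfrange]
    apply Set.Subset.antisymm
    · apply Set.iUnion_subset
      intro k
      refine Set.subset_iUnion_of_subset k (Set.Iio_subset_Iio ?_)
      haveI : Finite (L k) := (hLfin k).to_subtype
      exact Nat.le_of_dvd Nat.card_pos (hdvd1 k)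
    · apply Set.iUnion_subset
      intro k
      refine Set.subset_iUnion_of_subset (k + 1) (Set.Iio_subset_Iio ?_)
      haveI : Finite (G (k + 1)) := (hGfin (k + 1)).to_subtype
      exact Nat.le_of_dvd Nat.card_pos (hdvd2 k)
  haveI : Nonempty Λ := ⟨1⟩
  set φ : Γ → Λ := fun x => Function.invFun f (e x) with hφ
  have hfφ : ∀ x, f (φ x) = e x := by
    intro x
    apply Function.invFun_eq
    have : e x ∈ Set.range f := hranges ▸ Set.mem_range_self x
    exact this
  refine ⟨φ, ⟨?_, ?_⟩, ?_, ?_⟩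
  · intro x y hxy
    apply heinj
    rw [← hfφ x, ← hfφ y, hxy]
  · intro y
    have : f y ∈ Set.range e := hranges ▸ Set.mem_range_self y
    obtain ⟨x, hx⟩ := this
    refine ⟨x, hfinj ?_⟩
    rw [hfφ x, hx]
  · intro ℓ k hlk x₁ x₂ _ _ hx
    have h1 : e x₁ / Nat.card (G ℓ) = e x₂ / Nat.card (G ℓ) := (heblock ℓ x₁ x₂).mp hx
    have h2 : e x₁ / Nat.card (L ℓ) = e x₂ / Nat.card (L ℓ) := div_trans (hdvd1 ℓ) h1
    rw [← hfφ x₁, ← hfφ x₂] at h2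
    exact (hfblock ℓ (φ x₁) (φ x₂)).mpr h2
  · intro ℓ k hlk x₁ x₂ _ _ hx
    have h1 : f (φ x₁) / Nat.card (L ℓ) = f (φ x₂) / Nat.card (L ℓ) :=
      (hfblock ℓ (φ x₁) (φ x₂)).mp hx
    rw [hfφ x₁, hfφ x₂] at h1
    have h2 : e x₁ / Nat.card (G (ℓ + 1)) = e x₂ / Nat.card (G (ℓ + 1)) :=
      div_trans (hdvd2 ℓ) h1
    exact (heblock (ℓ + 1) x₁ x₂).mpr h2
end

section
/- Every metric space with bounded geometry and asymptotic dimension zero is bijectively coarsely equivalent to a subset of the nonnegative integers with the standard metric. -/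
namespace Stmt13Aux

variable {X : Type*} [MetricSpace X]

/-- Chain equivalence at scale `n`. -/
def E (n : ℕ) (x y : X) : Prop :=
  Relation.ReflTransGen (fun a b : X => dist a b ≤ (n : ℝ)) x y

lemma E_refl (n : ℕ) (x : X) : E n x x := Relation.ReflTransGen.refl

lemma E_symm {n : ℕ} {x y : X} (h : E n x y) : E n y x :=
  by haveI : Std.Symm (fun a b : X => dist a b ≤ (n : ℝ)) := ⟨fun a b hab => by rwa [dist_comm]⟩
     exact Relation.ReflTransGen.symmetric.symm _ _ h

lemma E_trans {n : ℕ} {x y z : X} (h1 : E n x y) (h2 : E n y z) : E n x z :=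
  Relation.ReflTransGen.trans h1 h2

lemma E_mono {m n : ℕ} (h : m ≤ n) {x y : X} (hxy : E m x y) : E n x y :=
  Relation.ReflTransGen.mono
    (fun a b (hab : dist a b ≤ (m : ℝ)) => hab.trans (by exact_mod_cast Nat.cast_le.mpr h)) _ _ hxy

lemma E_zero {x y : X} (h : E 0 x y) : x = y := by
  induction h with
  | refl => rfl
  | @tail b c _ h2 ih =>
    have h3 : dist b c ≤ (0 : ℝ) := by exact_mod_cast h2
    exact ih.trans (dist_le_zero.mp h3)

lemma E_of_dist {n : ℕ} {x y : X} (h : dist x y ≤ (n : ℝ)) : E n x y :=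
  Relation.ReflTransGen.single h

/-- Component of `x` at scale `n`. -/
def Cs (n : ℕ) (x : X) : Set X := {y | E n x y}

lemma mem_Cs_self (n : ℕ) (x : X) : x ∈ Cs n x := E_refl n x

lemma Cs_eq_of_E {n : ℕ} {x y : X} (h : E n x y) : Cs n x = Cs n y := by
  ext z
  exact ⟨fun hz => E_trans (E_symm h) hz, fun hz => E_trans h hz⟩

variable (e : X → ℕ) (x₀ : X)

open Classical in
/-- A complete invariant of `n`-components, equal to `0` exactly on the component of `x₀`. -/
noncomputable def key (n : ℕ) (x : X) : ℕ :=
  if E n x₀ x then 0 else sInf (e '' Cs n x) + 1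

/-- Index of the `n`-component of `x` within its `(n+1)`-component. -/
noncomputable def jdx (n : ℕ) (x : X) : ℕ :=
  {k ∈ key e x₀ n '' Cs (n + 1) x | k < key e x₀ n x}.ncard

/-- Block lengths. -/
def Lb (K : ℕ → ℕ) : ℕ → ℕ
  | 0 => 1
  | n + 1 => 2 * K (n + 1) * Lb K n

/-- Position of `x` within its `n`-component. -/
noncomputable def pf (K : ℕ → ℕ) : ℕ → X → ℕ
  | 0, _ => 0
  | n + 1, x => jdx e x₀ n x * Lb K n + pf K n x

lemma key_eq_of_E {n : ℕ} {x y : X} (h : E n x y) : key e x₀ n x = key e x₀ n y := by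
  unfold key
  rw [Cs_eq_of_E h]
  by_cases hx : E n x₀ x
  · rw [if_pos hx, if_pos (E_trans hx h)]
  · rw [if_neg hx, if_neg (fun hy => hx (E_trans hy (E_symm h)))]

lemma key_eq_zero {n : ℕ} {x : X} (h : E n x₀ x) : key e x₀ n x = 0 := if_pos h

lemma key_inj (he : Function.Injective e) {n : ℕ} {x y : X}
    (h : key e x₀ n x = key e x₀ n y) : E n x y := by
  unfold key at h
  by_cases hx : E n x₀ x <;> by_cases hy : E n x₀ y
  · exact E_trans (E_symm hx) hy
  · rw [if_pos hx, if_neg hy] at h; omega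
  · rw [if_neg hx, if_pos hy] at h; omega
  · rw [if_neg hx, if_neg hy] at h
    have h' : sInf (e '' Cs n x) = sInf (e '' Cs n y) := by omega
    have hxn : (e '' Cs n x).Nonempty := ⟨e x, x, mem_Cs_self n x, rfl⟩
    have hyn : (e '' Cs n y).Nonempty := ⟨e y, y, mem_Cs_self n y, rfl⟩
    obtain ⟨a, ha, hea⟩ := Nat.sInf_mem hxn
    obtain ⟨b, hb, heb⟩ := Nat.sInf_mem hyn
    have : a = b := he (by rw [hea, heb, h'])
    exact E_trans (ha : E n x a) (this ▸ E_symm (hb : E n y b))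

lemma jdx_eq_of_E {n : ℕ} {x y : X} (h : E n x y) : jdx e x₀ n x = jdx e x₀ n y := by
  unfold jdx
  rw [key_eq_of_E e x₀ h, Cs_eq_of_E (E_mono (Nat.le_succ n) h)]

lemma jdx_eq_zero {n : ℕ} {x : X} (h : E n x₀ x) : jdx e x₀ n x = 0 := by
  unfold jdx
  rw [key_eq_zero e x₀ h]
  simp

/-- Comparing ranks of elements within a finite set of naturals. -/
lemma rank_inj {S : Set ℕ} (hS : S.Finite) {a b : ℕ} (ha : a ∈ S) (hb : b ∈ S)
    (h : {k ∈ S | k < a}.ncard = {k ∈ S | k < b}.ncard) : a = b := by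
  have main : ∀ a b : ℕ, a ∈ S → b ∈ S → a < b →
      {k ∈ S | k < a}.ncard < {k ∈ S | k < b}.ncard := by
    intro a b ha hb hab
    apply Set.ncard_lt_ncard
    · constructor
      · exact fun k hk => ⟨hk.1, hk.2.trans hab⟩
      · intro hsub
        exact absurd (hsub ⟨ha, hab⟩).2 (lt_irrefl a)
    · exact hS.subset (Set.sep_subset _ _)
  rcases lt_trichotomy a b with hlt | heq | hgt
  · exact absurd h (Nat.ne_of_lt (main a b ha hb hlt))
  · exact heq
  · exact absurd h.symm (Nat.ne_of_lt (main b a hb ha hgt))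

lemma jdx_inj (he : Function.Injective e) {n : ℕ} {x y : X}
    (hfin : (Cs (n + 1) x).Finite) (hE : E (n + 1) x y)
    (h : jdx e x₀ n x = jdx e x₀ n y) : E n x y := by
  have hCs : Cs (n + 1) y = Cs (n + 1) x := (Cs_eq_of_E hE).symm
  unfold jdx at h
  rw [hCs] at h
  have hSfin : (key e x₀ n '' Cs (n + 1) x).Finite := hfin.image _
  have hax : key e x₀ n x ∈ key e x₀ n '' Cs (n + 1) x :=
    ⟨x, mem_Cs_self _ x, rfl⟩
  have hay : key e x₀ n y ∈ key e x₀ n '' Cs (n + 1) x :=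
    ⟨y, hE, rfl⟩
  exact key_inj e x₀ he (rank_inj hSfin hax hay h)

lemma jdx_lt {n : ℕ} {x : X} {K : ℕ} (hfin : (Cs (n + 1) x).Finite)
    (hcard : (Cs (n + 1) x).ncard ≤ K) : jdx e x₀ n x < K := by
  have hax : key e x₀ n x ∈ key e x₀ n '' Cs (n + 1) x := ⟨x, mem_Cs_self _ x, rfl⟩
  have h1 : {k ∈ key e x₀ n '' Cs (n + 1) x | k < key e x₀ n x}.ncard
      < (key e x₀ n '' Cs (n + 1) x).ncard := by
    apply Set.ncard_lt_ncard
    · constructor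
      · exact Set.sep_subset _ _
      · intro hsub
        exact absurd (hsub hax).2 (lt_irrefl _)
    · exact hfin.image _
  calc jdx e x₀ n x < (key e x₀ n '' Cs (n + 1) x).ncard := h1
    _ ≤ (Cs (n + 1) x).ncard := Set.ncard_image_le hfin
    _ ≤ K := hcard

variable (K : ℕ → ℕ)

lemma Lb_pos (hK1 : ∀ n, 1 ≤ K n) (n : ℕ) : 0 < Lb K n := by
  induction n with
  | zero => exact one_pos
  | succ n ih =>
    have := hK1 (n + 1)
    simp only [Lb]
    positivity

lemma Lb_mono (hK1 : ∀ n, 1 ≤ K n) {m n : ℕ} (h : m ≤ n) : Lb K m ≤ Lb K n := by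
  induction n, h using Nat.le_induction with
  | base => exact le_refl _
  | succ n hn ih =>
    calc Lb K m ≤ Lb K n := ih
      _ ≤ 2 * K (n + 1) * Lb K n := by nlinarith [hK1 (n + 1), Lb_pos K hK1 n]
      _ = Lb K (n + 1) := rfl

lemma two_pow_le_Lb (hK1 : ∀ n, 1 ≤ K n) (n : ℕ) : 2 ^ n ≤ Lb K n := by
  induction n with
  | zero => simp [Lb]
  | succ n ih =>
    have := hK1 (n + 1)
    calc 2 ^ (n + 1) = 2 * 2 ^ n := by ring
      _ ≤ 2 * Lb K n := by omega
      _ ≤ 2 * K (n + 1) * Lb K n := by nlinarith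
      _ = Lb K (n + 1) := rfl

lemma pf_lt (hfin : ∀ (n : ℕ) (x : X), (Cs n x).Finite)
    (hcard : ∀ (n : ℕ) (x : X), (Cs n x).ncard ≤ K n) (hK1 : ∀ n, 1 ≤ K n)
    (n : ℕ) (x : X) : 2 * pf e x₀ K n x < Lb K n := by
  induction n with
  | zero => simp [pf, Lb]
  | succ n ih =>
    have hj : jdx e x₀ n x < K (n + 1) := jdx_lt e x₀ (hfin (n + 1) x) (hcard (n + 1) x)
    have hL : 0 < Lb K n := Lb_pos K hK1 n
    simp only [pf, Lb]
    nlinarith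

lemma pf_sub_eq {n : ℕ} {x y : X} (hE : E n x y) {m : ℕ} (hm : n ≤ m) :
    (pf e x₀ K m x : ℤ) - pf e x₀ K m y = (pf e x₀ K n x : ℤ) - pf e x₀ K n y := by
  induction m, hm using Nat.le_induction with
  | base => rfl
  | succ m hm ih =>
    have hj : jdx e x₀ m x = jdx e x₀ m y := jdx_eq_of_E e x₀ (E_mono hm hE)
    simp only [pf]
    push_cast
    rw [hj]
    linarith

lemma pf_stab {n : ℕ} {x : X} (h : dist x₀ x ≤ (n : ℝ)) {m : ℕ} (hm : n ≤ m) :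
    pf e x₀ K m x = pf e x₀ K n x := by
  induction m, hm using Nat.le_induction with
  | base => rfl
  | succ m hm ih =>
    have hE : E m x₀ x := E_of_dist (h.trans (by exact_mod_cast Nat.cast_le.mpr hm))
    simp only [pf, jdx_eq_zero e x₀ hE, zero_mul, zero_add, ih]

/-- The embedding into ℕ. -/
noncomputable def fdef (x : X) : ℕ := pf e x₀ K ⌈dist x₀ x⌉₊ x

lemma fdef_eq {n : ℕ} {x : X} (h : dist x₀ x ≤ (n : ℝ)) :
    fdef e x₀ K x = pf e x₀ K n x := by
  have h0 : dist x₀ x ≤ (⌈dist x₀ x⌉₊ : ℝ) := Nat.le_ceil _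
  have h1 := pf_stab e x₀ K h0 (Nat.le_max_left ⌈dist x₀ x⌉₊ n)
  have h2 := pf_stab e x₀ K h (Nat.le_max_right ⌈dist x₀ x⌉₊ n)
  rw [fdef, ← h1, h2]

lemma exists_M (x₀ : X) (n : ℕ) (x y : X) :
    ∃ M : ℕ, n ≤ M ∧ dist x₀ x ≤ (M : ℝ) ∧ dist x₀ y ≤ (M : ℝ) := by
  refine ⟨n + ⌈dist x₀ x⌉₊ + ⌈dist x₀ y⌉₊, by omega, ?_, ?_⟩
  · have h1 : ⌈dist x₀ x⌉₊ ≤ n + ⌈dist x₀ x⌉₊ + ⌈dist x₀ y⌉₊ := by omega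
    exact (Nat.le_ceil _).trans (Nat.cast_le.mpr h1)
  · have h1 : ⌈dist x₀ y⌉₊ ≤ n + ⌈dist x₀ x⌉₊ + ⌈dist x₀ y⌉₊ := by omega
    exact (Nat.le_ceil _).trans (Nat.cast_le.mpr h1)

lemma two_mul_abs_sub_lt {a b L : ℕ} (ha : 2 * a < L) (hb : 2 * b < L) :
    2 * |(a : ℤ) - b| < L := by
  rcases le_total a b with h | h
  · rw [abs_sub_comm, abs_of_nonneg (sub_nonneg.mpr (by exact_mod_cast h))]
    omega
  · rw [abs_of_nonneg (sub_nonneg.mpr (by exact_mod_cast h))]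
    omega

lemma close_of_E {n : ℕ} {x y : X}
    (hfin : ∀ (n : ℕ) (x : X), (Cs n x).Finite)
    (hcard : ∀ (n : ℕ) (x : X), (Cs n x).ncard ≤ K n) (hK1 : ∀ n, 1 ≤ K n)
    (hE : E n x y) :
    2 * |(fdef e x₀ K x : ℤ) - fdef e x₀ K y| < Lb K n := by
  obtain ⟨M, hMn, hMx, hMy⟩ := exists_M x₀ n x y
  rw [fdef_eq e x₀ K hMx, fdef_eq e x₀ K hMy, pf_sub_eq e x₀ K hE hMn]
  exact two_mul_abs_sub_lt (pf_lt e x₀ K hfin hcard hK1 n x) (pf_lt e x₀ K hfin hcard hK1 n y)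

set_option maxHeartbeats 1000000 in
/-- Points in different `n`-components are far apart in the image. -/
lemma far_of_not_E (he : Function.Injective e) {n : ℕ} {x y : X}
    (hfin : ∀ (n : ℕ) (x : X), (Cs n x).Finite)
    (hcard : ∀ (n : ℕ) (x : X), (Cs n x).ncard ≤ K n) (hK1 : ∀ n, 1 ≤ K n)
    (hne : ¬ E n x y) :
    (Lb K n : ℤ) < 2 * |(fdef e x₀ K x : ℤ) - fdef e x₀ K y| := by
  have hex : ∃ m : ℕ, E m x y :=
    ⟨⌈dist x y⌉₊, E_of_dist (Nat.le_ceil _)⟩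
  classical
  let m' := Nat.find hex
  have hm'E : E m' x y := Nat.find_spec hex
  have hm'n : n < m' := by
    by_contra hc
    exact hne (E_mono (Nat.le_of_not_lt hc) hm'E)
  obtain ⟨t, ht⟩ : ∃ t, m' = t + 1 := ⟨m' - 1, by omega⟩
  have hnt : n ≤ t := by omega
  have hnotEt : ¬ E t x y := Nat.find_min hex (by omega)
  rw [ht] at hm'E
  have hjne : jdx e x₀ t x ≠ jdx e x₀ t y := by
    intro hc
    exact hnotEt (jdx_inj e x₀ he (hfin (t + 1) x) hm'E hc)
  obtain ⟨M, hMn, hMx, hMy⟩ := exists_M x₀ (t + 1) x y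
  have hx : fdef e x₀ K x = pf e x₀ K M x := fdef_eq e x₀ K hMx
  have hy : fdef e x₀ K y = pf e x₀ K M y := fdef_eq e x₀ K hMy
  have hsub : (pf e x₀ K M x : ℤ) - pf e x₀ K M y
      = (pf e x₀ K (t + 1) x : ℤ) - pf e x₀ K (t + 1) y :=
    pf_sub_eq e x₀ K hm'E hMn
  have h1 := pf_lt e x₀ K hfin hcard hK1 t x
  have h2 := pf_lt e x₀ K hfin hcard hK1 t y
  have hLmono : Lb K n ≤ Lb K t := Lb_mono K hK1 hnt
  have hjx := jdx_lt e x₀ (hfin (t + 1) x) (hcard (t + 1) x)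
  rw [hx, hy, hsub]
  simp only [pf]
  have hpos : 0 < Lb K t := Lb_pos K hK1 t
  have hj1 : 1 ≤ |(jdx e x₀ t x : ℤ) - jdx e x₀ t y| :=
    Int.one_le_abs (sub_ne_zero.mpr (by exact_mod_cast hjne))
  have key : (Lb K t : ℤ) ≤ |(jdx e x₀ t x : ℤ) - jdx e x₀ t y| * Lb K t := by
    nlinarith [abs_nonneg ((jdx e x₀ t x : ℤ) - jdx e x₀ t y)]
  have expand : ((jdx e x₀ t x * Lb K t + pf e x₀ K t x : ℕ) : ℤ)
      - ((jdx e x₀ t y * Lb K t + pf e x₀ K t y : ℕ) : ℤ)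
      = ((jdx e x₀ t x : ℤ) - jdx e x₀ t y) * Lb K t
        + ((pf e x₀ K t x : ℤ) - pf e x₀ K t y) := by push_cast; ring
  rw [expand]
  have habs : |((jdx e x₀ t x : ℤ) - jdx e x₀ t y) * Lb K t
        + ((pf e x₀ K t x : ℤ) - pf e x₀ K t y)|
      ≥ |((jdx e x₀ t x : ℤ) - jdx e x₀ t y) * Lb K t|
        - |(pf e x₀ K t x : ℤ) - pf e x₀ K t y| := by
    have := abs_sub_abs_le_abs_sub (((jdx e x₀ t x : ℤ) - jdx e x₀ t y) * Lb K t)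
      (-(((pf e x₀ K t x : ℤ) - pf e x₀ K t y)))
    simp only [sub_neg_eq_add, abs_neg] at this
    linarith
  rw [abs_mul, abs_of_nonneg (by positivity : (0:ℤ) ≤ (Lb K t : ℤ))] at habs
  have hpf_abs : 2 * |(pf e x₀ K t x : ℤ) - pf e x₀ K t y| < Lb K t :=
    two_mul_abs_sub_lt h1 h2
  have : (Lb K t : ℤ) < 2 * (|(jdx e x₀ t x : ℤ) - jdx e x₀ t y| * Lb K t
      - |(pf e x₀ K t x : ℤ) - pf e x₀ K t y|) := by
    nlinarith
  calc (Lb K n : ℤ) ≤ (Lb K t : ℤ) := by exact_mod_cast hLmono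
    _ < _ := by nlinarith

lemma abs_cast_real (a b : ℕ) : |(a : ℝ) - (b : ℝ)| = ((|(a : ℤ) - (b : ℤ)| : ℤ) : ℝ) := by
  rw [Int.cast_abs]
  push_cast
  ring_nf

end Stmt13Aux

open Stmt13Aux in
/-- Every metric space of bounded geometry with asymptotic dimension zero is bijectively
coarsely equivalent to a subset of the nonnegative integers with the standard metric. -/
theorem stmt_13 (X : Type*) [MetricSpace X]
    (hbg : ∀ r > (0 : ℝ), ∃ N : ℕ, ∀ x : X,
      {y : X | dist x y ≤ r}.Finite ∧ {y : X | dist x y ≤ r}.ncard ≤ N)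
    (hasdim : ∀ R > (0 : ℝ), ∃ B : ℝ, ∀ x y : X,
      Relation.ReflTransGen (fun a b : X => dist a b ≤ R) x y → dist x y ≤ B) :
    ∃ (Y : Set ℕ) (f : X → Y), Function.Bijective f ∧
      (∀ R > (0 : ℝ), ∃ S > (0 : ℝ), ∀ x x' : X,
        dist x x' ≤ R → |((f x : ℕ) : ℝ) - ((f x' : ℕ) : ℝ)| ≤ S) ∧
      (∀ R > (0 : ℝ), ∃ S > (0 : ℝ), ∀ x x' : X,
        |((f x : ℕ) : ℝ) - ((f x' : ℕ) : ℝ)| ≤ R → dist x x' ≤ S) := by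
  classical
  rcases isEmpty_or_nonempty X with hX | hX
  · refine ⟨∅, fun x => isEmptyElim x, ⟨fun x => isEmptyElim x, fun y => (Set.notMem_empty _ y.2).elim⟩,
      fun R hR => ⟨1, one_pos, fun x => isEmptyElim x⟩,
      fun R hR => ⟨1, one_pos, fun x => isEmptyElim x⟩⟩
  obtain ⟨x₀⟩ := hX
  -- countability
  have hcnt : Countable X := by
    have hU : (Set.univ : Set X).Countable := by
      have hcover : (Set.univ : Set X) = ⋃ k : ℕ, {y : X | dist x₀ y ≤ (k : ℝ) + 1} := by
        ext y
        simp only [Set.mem_univ, Set.mem_iUnion, Set.mem_setOf_eq, true_iff]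
        exact ⟨⌈dist x₀ y⌉₊, (Nat.le_ceil _).trans (by linarith)⟩
      rw [hcover]
      refine Set.countable_iUnion fun k => ?_
      obtain ⟨N, hN⟩ := hbg ((k : ℝ) + 1) (by positivity)
      exact (hN x₀).1.countable
    exact Set.countable_univ_iff.mp hU
  obtain ⟨e, he⟩ := (countable_iff_exists_injective X).mp hcnt
  -- bounds
  have hB : ∀ n : ℕ, ∃ Bn : ℝ, ∀ x y : X, E n x y → dist x y ≤ Bn := by
    intro n
    obtain ⟨Bn, hBn⟩ := hasdim (max (n : ℝ) 1) (lt_of_lt_of_le one_pos (le_max_right _ _))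
    exact ⟨Bn, fun x y h =>
      hBn x y (Relation.ReflTransGen.mono (fun a b (hab : dist a b ≤ (n : ℝ)) => hab.trans (le_max_left _ _)) _ _ h)⟩
  choose B hBspec using hB
  have hKex : ∀ n : ℕ, ∃ Kn : ℕ,
      (∀ x : X, (Cs n x).Finite ∧ (Cs n x).ncard ≤ Kn) ∧ 1 ≤ Kn := by
    intro n
    obtain ⟨N, hN⟩ := hbg (max (B n) 1) (lt_of_lt_of_le one_pos (le_max_right _ _))
    have hsub : ∀ x : X, Cs n x ⊆ {y : X | dist x y ≤ max (B n) 1} :=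
      fun x y hy => le_trans (hBspec n x y hy) (le_max_left _ _)
    refine ⟨N, fun x => ⟨(hN x).1.subset (hsub x),
      le_trans (Set.ncard_le_ncard (hsub x) (hN x).1) (hN x).2⟩, ?_⟩
    have hmem : x₀ ∈ {y : X | dist x₀ y ≤ max (B n) 1} := by
      simp only [Set.mem_setOf_eq, dist_self]
      exact le_trans zero_le_one (le_max_right _ _)
    have hpos : 0 < {y : X | dist x₀ y ≤ max (B n) 1}.ncard :=
      (Set.ncard_pos (hN x₀).1).mpr ⟨x₀, hmem⟩
    have := (hN x₀).2
    omega
  choose K hKspec using hKex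
  have hfin : ∀ (n : ℕ) (x : X), (Cs n x).Finite := fun n x => ((hKspec n).1 x).1
  have hcard : ∀ (n : ℕ) (x : X), (Cs n x).ncard ≤ K n := fun n x => ((hKspec n).1 x).2
  have hK1 : ∀ n, 1 ≤ K n := fun n => (hKspec n).2
  have hinj : Function.Injective (fdef e x₀ K) := by
    intro x y hxy
    by_contra hne
    have hnE : ¬ E 0 x y := fun h => hne (E_zero h)
    have h := far_of_not_E e x₀ K he hfin hcard hK1 hnE
    rw [hxy, sub_self, abs_zero, mul_zero] at h
    simp [Lb] at h
  refine ⟨Set.range (fdef e x₀ K), fun x => ⟨fdef e x₀ K x, Set.mem_range_self x⟩,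
    ⟨fun a b hab => hinj (congrArg Subtype.val hab),
     fun y => by obtain ⟨x, hx⟩ := y.2; exact ⟨x, Subtype.ext hx⟩⟩, ?_, ?_⟩
  · -- bornologous
    intro R hR
    set n : ℕ := ⌈R⌉₊ with hn
    refine ⟨Lb K n, by exact_mod_cast Lb_pos K hK1 n, fun x x' hxx' => ?_⟩
    have hE : E n x x' := E_of_dist (hxx'.trans (Nat.le_ceil R))
    have h := close_of_E e x₀ K hfin hcard hK1 hE
    have h2 : |(fdef e x₀ K x : ℤ) - fdef e x₀ K x'| ≤ Lb K n := by omega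
    calc |((fdef e x₀ K x : ℕ) : ℝ) - ((fdef e x₀ K x' : ℕ) : ℝ)|
        = ((|(fdef e x₀ K x : ℤ) - fdef e x₀ K x'| : ℤ) : ℝ) := abs_cast_real _ _
      _ ≤ ((Lb K n : ℤ) : ℝ) := by exact_mod_cast h2
      _ = (Lb K n : ℝ) := by push_cast; ring
  · -- inverse bornologous
    intro R hR
    set n : ℕ := ⌈2 * R⌉₊ with hn
    refine ⟨max (B n) 1, lt_of_lt_of_le one_pos (le_max_right _ _), fun x x' hxx' => ?_⟩
    have hE : E n x x' := by
      by_contra hne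
      have h := far_of_not_E e x₀ K he hfin hcard hK1 hne
      have hpow : (2 : ℕ) ^ n ≤ Lb K n := two_pow_le_Lb K hK1 n
      have hlt : (n : ℝ) < 2 ^ n := by exact_mod_cast Nat.lt_two_pow_self (n := n)
      have hceil : 2 * R ≤ (n : ℝ) := Nat.le_ceil _
      rw [abs_cast_real] at hxx'
      have : (Lb K n : ℝ) < 2 * ((|(fdef e x₀ K x : ℤ) - fdef e x₀ K x'| : ℤ) : ℝ) := by
        exact_mod_cast h
      have : (Lb K n : ℝ) ≤ 2 * R := by linarith
      have : ((2:ℕ) ^ n : ℝ) ≤ 2 * R := le_trans (by exact_mod_cast hpow) this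
      push_cast at this
      linarith
    exact le_trans (hBspec n x x' hE) (le_max_left _ _)
end

section
/- Let (X,d) have bounded geometry and asymptotic dimension zero, fix x₀ ∈ X, and let Xₙ denote the n-connected component of X containing x₀. Then for every n ∈ ℕ there is a finite subset Yₙ ⊆ ℤ_{≥0} and a bijection fₙ: Xₙ → Yₙ with fₙ(x₀) = 0 which maps every k-connected component of Xₙ onto a k-connected component of Yₙ for each k ≤ n. Moreover, given such fₙ, one can choose f_{n+1}: X_{n+1} → Y_{n+1} extending fₙ with Yₙ an n-connected component of Y_{n+1}. -/
/-- R-connectedness within a subset A (chains staying in A with steps ≤ R). -/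
def ChainIn {α : Type*} (d : α → α → ℝ) (A : Set α) (R : ℝ) (x y : α) : Prop :=
  x ∈ A ∧ y ∈ A ∧ Relation.ReflTransGen (fun a b : α => a ∈ A ∧ b ∈ A ∧ d a b ≤ R) x y

/-- The standard metric on the nonnegative integers. -/
def ndist (a b : ℕ) : ℝ := |(a : ℝ) - (b : ℝ)|

/-- The n-connected component of X containing x₀. -/
def Comp (X : Type*) [MetricSpace X] (x₀ : X) (n : ℕ) : Set X :=
  {x : X | Relation.ReflTransGen (fun a b : X => dist a b ≤ (n : ℝ)) x₀ x}

/-- `f` restricts to a bijection from the n-component Xₙ of x₀ onto the finite set Y ⊆ ℤ≥0,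
sends x₀ to 0, and maps each k-connected component of Xₙ onto a k-connected component of Y,
for every k ≤ n. -/
def GoodMap (X : Type*) [MetricSpace X] (x₀ : X) (n : ℕ) (Y : Finset ℕ) (f : X → ℕ) : Prop :=
  Set.BijOn f (Comp X x₀ n) (↑Y : Set ℕ) ∧ f x₀ = 0 ∧
  ∀ k : ℕ, k ≤ n → ∀ x ∈ Comp X x₀ n,
    f '' {x' : X | ChainIn (fun a b => dist a b) (Comp X x₀ n) (k : ℝ) x x'} =
      {m : ℕ | ChainIn ndist (↑Y : Set ℕ) (k : ℝ) (f x) m}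

theorem rtg_mono {α : Type*} {r p : α → α → Prop} (H : ∀ a b, r a b → p a b) {a b : α}
    (h : Relation.ReflTransGen r a b) : Relation.ReflTransGen p a b := by
  induction h with
  | refl => exact .refl
  | tail _ hl ih => exact ih.tail (H _ _ hl)

theorem rtg_lift {α β : Type*} {r : α → α → Prop} {p : β → β → Prop} (f : α → β)
    (H : ∀ a b, r a b → p (f a) (f b)) {a b : α}
    (h : Relation.ReflTransGen r a b) : Relation.ReflTransGen p (f a) (f b) := by
  induction h with
  | refl => exact .refl
  | tail _ hl ih => exact ih.tail (H _ _ hl)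

theorem rtg_symmetric {α : Type*} {r : α → α → Prop} (H : ∀ a b, r a b → r b a) {a b : α}
    (h : Relation.ReflTransGen r a b) : Relation.ReflTransGen r b a := by
  induction h with
  | refl => exact .refl
  | tail _ hl ih => exact Relation.ReflTransGen.head (H _ _ hl) ih

section S14

open Set

variable {α : Type*} {d : α → α → ℝ} {A B : Set α} {r r' : ℝ} {x y z : α}

lemma ChainIn.mono_set (hAB : A ⊆ B) (h : ChainIn d A r x y) : ChainIn d B r x y :=
  ⟨hAB h.1, hAB h.2.1, rtg_mono (fun _ _ hab => ⟨hAB hab.1, hAB hab.2.1, hab.2.2⟩) h.2.2⟩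

lemma ChainIn.mono_r (hr : r ≤ r') (h : ChainIn d A r x y) : ChainIn d A r' x y :=
  ⟨h.1, h.2.1, rtg_mono (fun _ _ hab => ⟨hab.1, hab.2.1, hab.2.2.trans hr⟩) h.2.2⟩

lemma ChainIn.symm (hd : ∀ a b, d a b = d b a) (h : ChainIn d A r x y) : ChainIn d A r y x :=
  ⟨h.2.1, h.1, (rtg_symmetric
    (fun a b hab => ⟨hab.2.1, hab.1, by rw [hd]; exact hab.2.2⟩)) h.2.2⟩

lemma ChainIn.trans (h : ChainIn d A r x y) (h' : ChainIn d A r y z) : ChainIn d A r x z :=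
  ⟨h.1, h'.2.1, h.2.2.trans h'.2.2⟩

/-- chains in a bigger set starting in a "closed" subset stay there -/
lemma chain_closed (hA : ∀ a ∈ A, ∀ b ∈ B, d a b ≤ r → b ∈ A)
    (hx : x ∈ A) (h : ChainIn d B r x y) : ChainIn d A r x y := by
  obtain ⟨-, -, h⟩ := h
  suffices hs : y ∈ A ∧ Relation.ReflTransGen (fun a b => a ∈ A ∧ b ∈ A ∧ d a b ≤ r) x y from
    ⟨hx, hs.1, hs.2⟩
  induction h with
  | refl => exact ⟨hx, .refl⟩
  | tail hst hlast ih =>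
      have hb := hA _ ih.1 _ hlast.2.1 hlast.2.2
      exact ⟨hb, ih.2.tail ⟨ih.1, hb, hlast.2.2⟩⟩

lemma chain_prefix (h : Relation.ReflTransGen (fun a b => d a b ≤ r) x y) :
    ChainIn d {z | Relation.ReflTransGen (fun a b => d a b ≤ r) x z} r x y := by
  induction h with
  | refl => exact ⟨.refl, .refl, .refl⟩
  | tail hst hlast ih =>
      exact ⟨ih.1, ih.2.1.tail hlast, ih.2.2.tail ⟨ih.2.1, ih.2.1.tail hlast, hlast⟩⟩


lemma ndist_comm (a b : ℕ) : ndist a b = ndist b a := abs_sub_comm _ _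

lemma ndist_shift (a b t : ℕ) : ndist (a + t) (b + t) = ndist a b := by
  unfold ndist; push_cast; ring_nf

lemma ndist_le_iff {a b k : ℕ} : ndist a b ≤ (k : ℝ) ↔ a ≤ b + k ∧ b ≤ a + k := by
  unfold ndist
  rw [abs_sub_le_iff, sub_le_iff_le_add, sub_le_iff_le_add, ← Nat.cast_add, ← Nat.cast_add,
    Nat.cast_le, Nat.cast_le]
  omega

lemma chain_shift {S : Set ℕ} {r : ℝ} {a b t : ℕ} (h : ChainIn ndist S r a b) :
    ChainIn ndist ((· + t) '' S) r (a + t) (b + t) :=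
  ⟨⟨a, h.1, rfl⟩, ⟨b, h.2.1, rfl⟩, rtg_lift (· + t)
    (fun p q hpq => ⟨⟨p, hpq.1, rfl⟩, ⟨q, hpq.2.1, rfl⟩, by
      rw [ndist_shift]; exact hpq.2.2⟩) h.2.2⟩

lemma chain_unshift {S : Set ℕ} {r : ℝ} {a t b : ℕ}
    (h : ChainIn ndist ((· + t) '' S) r (a + t) b) :
    ∃ c, b = c + t ∧ ChainIn ndist S r a c := by
  have ha : a ∈ S := by
    obtain ⟨c, hc, hct⟩ := h.1
    have hct2 : c + t = a + t := hct
    rwa [show c = a by omega] at hc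
  obtain ⟨-, -, h⟩ := h
  induction h with
  | refl => exact ⟨a, rfl, ha, ha, .refl⟩
  | tail hst hlast ih =>
      obtain ⟨c, rfl, hc⟩ := ih
      obtain ⟨c', hc', rfl⟩ := hlast.2.1
      refine ⟨c', rfl, hc.trans ⟨hc.2.1, hc', .single ⟨hc.2.1, hc', ?_⟩⟩⟩
      rw [← ndist_shift c c' t]; exact hlast.2.2

lemma chain_shift_set {S : Set ℕ} {r : ℝ} {a t : ℕ} :
    (· + t) '' {m | ChainIn ndist S r a m} = {m | ChainIn ndist ((· + t) '' S) r (a + t) m} := by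
  ext m
  constructor
  · rintro ⟨c, hc, rfl⟩; exact chain_shift hc
  · intro hm; obtain ⟨c, rfl, hc⟩ := chain_unshift hm; exact ⟨c, hc, rfl⟩

variable {X : Type*} [MetricSpace X]

lemma comp_zero (x : X) : Comp X x 0 = {x} := by
  ext y
  simp only [Comp, Set.mem_setOf_eq, Set.mem_singleton_iff]
  constructor
  · intro h
    induction h with
    | refl => rfl
    | tail hst hlast ih =>
        have h0 : dist _ _ ≤ ((0:ℕ) : ℝ) := hlast
        rw [Nat.cast_zero] at h0
        rw [← dist_le_zero.mp h0]; exact ih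
  · rintro rfl; exact .refl

lemma comp_mono (x : X) {m n : ℕ} (h : m ≤ n) : Comp X x m ⊆ Comp X x n :=
  fun _ hy => rtg_mono (fun _ _ hab => hab.trans (Nat.cast_le.2 h)) hy

lemma comp_closed {x a : X} {n : ℕ} (ha : a ∈ Comp X x n) {b : X} (hb : dist a b ≤ (n : ℝ)) :
    b ∈ Comp X x n := Relation.ReflTransGen.tail ha hb

lemma comp_trans {x y : X} {n : ℕ} (hy : y ∈ Comp X x n) : Comp X y n ⊆ Comp X x n :=
  fun _ hz => hy.trans hz

lemma comp_symm {x y : X} {n : ℕ} (hy : y ∈ Comp X x n) : x ∈ Comp X y n :=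
  (rtg_symmetric (fun a b hab => by rwa [dist_comm] at hab)) hy

lemma comp_self (x : X) (n : ℕ) : x ∈ Comp X x n := Relation.ReflTransGen.refl

/-- the component as a chain-set -/
lemma comp_chainset {x : X} {n : ℕ} {z : X} (hz : z ∈ Comp X x n) :
    {x' : X | ChainIn (fun a b => dist a b) (Comp X x n) (n : ℝ) z x'} = Comp X x n := by
  apply Set.Subset.antisymm
  · exact fun x' hx' => hx'.2.1
  · intro x' hx'
    have h1 : ChainIn (fun a b => dist a b) (Comp X x n) (n : ℝ) x z := chain_prefix hz
    have h2 : ChainIn (fun a b => dist a b) (Comp X x n) (n : ℝ) x x' := chain_prefix hx'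
    exact (h1.symm (fun a b => dist_comm a b)).trans h2

lemma comp_finite
    (hbg : ∀ r > (0 : ℝ), ∃ N : ℕ, ∀ x : X,
      {y : X | dist x y ≤ r}.Finite ∧ {y : X | dist x y ≤ r}.ncard ≤ N)
    (hasdim : ∀ R > (0 : ℝ), ∃ B : ℝ, ∀ x y : X,
      Relation.ReflTransGen (fun a b : X => dist a b ≤ R) x y → dist x y ≤ B)
    (x : X) (n : ℕ) : (Comp X x (n + 1)).Finite := by
  obtain ⟨B, hB⟩ := hasdim ((n : ℝ) + 1) (by positivity)
  obtain ⟨N, hN⟩ := hbg (max B 1) (lt_of_lt_of_le one_pos (le_max_right _ _))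
  refine ((hN x).1).subset ?_
  intro y hy
  have : dist x y ≤ B := hB x y (by
    refine rtg_mono (fun a b hab => ?_) hy
    rwa [Nat.cast_add, Nat.cast_one] at hab)
  exact this.trans (le_max_left _ _)
lemma closed_rtg {D : Set X} {r : ℝ} (hcl : ∀ a ∈ D, ∀ b : X, dist a b ≤ r → b ∈ D)
    {z y : X} (hz : z ∈ D) (h : Relation.ReflTransGen (fun a b : X => dist a b ≤ r) z y) :
    y ∈ D := by
  induction h with
  | refl => exact hz
  | tail hst hlast ih => exact hcl _ ih _ hlast

structure GInv (x : X) (n : ℕ) (f : X → ℕ) (Y : Finset ℕ) (D : Set X) : Prop where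
  bij : Set.BijOn f D ↑Y
  base : f x = 0
  subC1 : Comp X x n ⊆ D
  subC : D ⊆ Comp X x (n + 1)
  closed : ∀ a ∈ D, ∀ b : X, dist a b ≤ (n : ℝ) → b ∈ D
  comps : ∀ k : ℕ, k ≤ n → ∀ z ∈ D,
    f '' {x' : X | ChainIn (fun a b => dist a b) D (k : ℝ) z x'} =
      {m : ℕ | ChainIn ndist (↑Y : Set ℕ) (k : ℝ) (f z) m}
  conn : ∀ m ∈ Y, ChainIn ndist (↑Y : Set ℕ) ((n : ℝ) + 1) 0 m

lemma inv_init {x : X} {n : ℕ} {Y : Finset ℕ} {f : X → ℕ} (h : GoodMap X x n Y f) :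
    GInv x n f Y (Comp X x n) where
  bij := h.1
  base := h.2.1
  subC1 := subset_rfl
  subC := comp_mono x (Nat.le_succ n)
  closed := fun _ ha _ hb => comp_closed ha hb
  comps := h.2.2
  conn := by
    intro m hm
    obtain ⟨z, hz, rfl⟩ := h.1.surjOn hm
    have hh := h.2.2 n le_rfl x (comp_self x n)
    have hmem : f z ∈ {m : ℕ | ChainIn ndist (↑Y : Set ℕ) ((n : ℕ) : ℝ) (f x) m} := by
      rw [← hh]; exact ⟨z, chain_prefix hz, rfl⟩
    rw [h.2.1] at hmem
    exact hmem.mono_r (by linarith)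

open Classical in
lemma inv_step {x : X} {n : ℕ} {f : X → ℕ} {Y : Finset ℕ} {D : Set X}
    (hInv : GInv x n f Y D) (y : X) (hyC : y ∈ Comp X x (n + 1)) (hyD : y ∉ D)
    {Z : Finset ℕ} {g : X → ℕ} (hg : GoodMap X y n Z g) :
    ∃ f' Y' D', GInv x n f' Y' D' ∧ y ∈ D' ∧ D ⊆ D' ∧ Set.EqOn f' f D := by
  have hdisj : ∀ z ∈ Comp X y n, z ∉ D := fun z hz hzD =>
    hyD (closed_rtg hInv.closed hzD (comp_symm hz))
  have hC2subC : Comp X y n ⊆ Comp X x (n + 1) := fun z hz =>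
    comp_trans hyC (comp_mono y n.le_succ hz)
  have h0Y : 0 ∈ Y := by
    rw [← hInv.base]; exact hInv.bij.mapsTo (hInv.subC1 (comp_self x n))
  have hYne : Y.Nonempty := ⟨0, h0Y⟩
  set M := Y.max' hYne with hM
  set t := M + n + 1 with ht
  have h0Z : 0 ∈ Z := by rw [← hg.2.1]; exact hg.1.mapsTo (comp_self y n)
  set f' : X → ℕ := fun z => if z ∈ Comp X y n then g z + t else f z with hf'
  have hYmem : ∀ m ∈ Y, m ≤ M := fun m hm => Y.le_max' m hm
  have hsep : ∀ a ∈ (Y : Set ℕ), ∀ b ∈ Z.image (· + t), ¬ (ndist a b ≤ (n : ℝ)) := by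
    intro a ha b hb hle
    obtain ⟨c, hc, rfl⟩ := Finset.mem_image.mp hb
    have h2 : a ≤ c + t + n ∧ c + t ≤ a + n := ndist_le_iff.mp hle
    have haM : a ≤ M := hYmem a ha
    omega
  have hEqD : Set.EqOn f' f D := fun z hz => by
    simp only [hf']; rw [if_neg (fun h => hdisj z h hz)]
  have hEqC2 : Set.EqOn f' (fun z => g z + t) (Comp X y n) := fun z hz => by
    simp only [hf']; rw [if_pos hz]
  have hbijD : Set.BijOn f' D ↑Y := hInv.bij.congr hEqD.symm
  have haddt : Set.BijOn (· + t) ↑Z ((· + t) '' ↑Z) :=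
    Set.InjOn.bijOn_image (fun a _ b _ h => by omega)
  have hbijC2 : Set.BijOn f' (Comp X y n) ((· + t) '' ↑Z) :=
    (haddt.comp hg.1).congr hEqC2.symm
  have hvalD : ∀ z ∈ D, f' z ∈ (Y : Set ℕ) := fun z hz => hbijD.mapsTo hz
  have hvalC2 : ∀ z ∈ Comp X y n, f' z ∈ ((· + t) '' ↑Z) := fun z hz => hbijC2.mapsTo hz
  have himlt : ∀ a ∈ (Y : Set ℕ), ∀ b ∈ ((· + t) '' (↑Z : Set ℕ)), a ≠ b := by
    rintro a ha b ⟨c, hc, rfl⟩ h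
    have h2 : a = c + t := h
    have := hYmem _ ha
    omega
  have hinj : Set.InjOn f' (D ∪ Comp X y n) := by
    rintro a (ha | ha) b (hb | hb) hab
    · exact hbijD.injOn ha hb hab
    · exact absurd hab (himlt _ (hvalD a ha) _ (hvalC2 b hb))
    · exact absurd hab.symm (himlt _ (hvalD b hb) _ (hvalC2 a ha))
    · exact hbijC2.injOn ha hb hab
  have hcoeY' : (↑(Y ∪ Z.image (· + t)) : Set ℕ) = ↑Y ∪ ((· + t) '' ↑Z) := by
    rw [Finset.coe_union, Finset.coe_image]
  have hbij' : Set.BijOn f' (D ∪ Comp X y n) ↑(Y ∪ Z.image (· + t)) := by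
    rw [hcoeY']; exact hbijD.union hbijC2 hinj
  have hsubY : (↑Y : Set ℕ) ⊆ ↑(Y ∪ Z.image (· + t)) := by
    rw [hcoeY']; exact Set.subset_union_left
  have hsubZ : ((· + t) '' (↑Z : Set ℕ)) ⊆ ↑(Y ∪ Z.image (· + t)) := by
    rw [hcoeY']; exact Set.subset_union_right
  -- connectivity
  have hchainZ : ∀ c ∈ Z, ChainIn ndist (↑Z : Set ℕ) ((n : ℕ) : ℝ) 0 c := by
    intro c hc
    obtain ⟨w, hw, rfl⟩ := hg.1.surjOn hc
    have hh := hg.2.2 n le_rfl y (comp_self y n)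
    have hmem : g w ∈ {m : ℕ | ChainIn ndist (↑Z : Set ℕ) ((n : ℕ) : ℝ) (g y) m} := by
      rw [← hh]; exact ⟨w, chain_prefix hw, rfl⟩
    rwa [hg.2.1] at hmem
  have hstepMt : ChainIn ndist ↑(Y ∪ Z.image (· + t)) ((n : ℝ) + 1) M t := by
    have hMY' : M ∈ (↑(Y ∪ Z.image (· + t)) : Set ℕ) := hsubY (Y.max'_mem hYne)
    have htY' : t ∈ (↑(Y ∪ Z.image (· + t)) : Set ℕ) := hsubZ ⟨0, h0Z, zero_add t⟩
    have hnd : ndist M t ≤ ((n + 1 : ℕ) : ℝ) := ndist_le_iff.mpr (by omega)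
    rw [Nat.cast_add, Nat.cast_one] at hnd
    exact ⟨hMY', htY', Relation.ReflTransGen.single ⟨hMY', htY', hnd⟩⟩
  have hconn' : ∀ m ∈ Y ∪ Z.image (· + t),
      ChainIn ndist (↑(Y ∪ Z.image (· + t)) : Set ℕ) ((n : ℝ) + 1) 0 m := by
    intro m hm
    rcases Finset.mem_union.mp hm with h | h
    · exact (hInv.conn m h).mono_set hsubY
    · obtain ⟨c, hc, rfl⟩ := Finset.mem_image.mp h
      have h1 : ChainIn ndist ((· + t) '' ↑Z) ((n : ℕ) : ℝ) (0 + t) (c + t) :=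
        chain_shift (hchainZ c hc)
      rw [zero_add] at h1
      have h0M : ChainIn ndist (↑(Y ∪ Z.image (· + t)) : Set ℕ) ((n : ℝ) + 1) 0 M :=
        (hInv.conn M (Y.max'_mem hYne)).mono_set hsubY
      exact (h0M.trans hstepMt).trans ((h1.mono_set hsubZ).mono_r (by linarith))
  -- component property
  have hclC2 : ∀ a ∈ Comp X y n, ∀ b : X, dist a b ≤ ((n : ℕ) : ℝ) → b ∈ Comp X y n :=
    fun _ ha _ hb => comp_closed ha hb
  have hclD' : ∀ a ∈ D ∪ Comp X y n, ∀ b : X, dist a b ≤ ((n : ℕ) : ℝ) → b ∈ D ∪ Comp X y n := by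
    rintro a (ha | ha) b hb
    · exact Or.inl (hInv.closed a ha b hb)
    · exact Or.inr (hclC2 a ha b hb)
  have hcomps : ∀ k : ℕ, k ≤ n → ∀ z ∈ D ∪ Comp X y n,
      f' '' {x' : X | ChainIn (fun a b => dist a b) (D ∪ Comp X y n) ((k : ℕ) : ℝ) z x'} =
        {m : ℕ | ChainIn ndist (↑(Y ∪ Z.image (· + t)) : Set ℕ) ((k : ℕ) : ℝ) (f' z) m} := by
    intro k hk z hz
    have hkR : ((k : ℕ) : ℝ) ≤ ((n : ℕ) : ℝ) := Nat.cast_le.mpr hk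
    rcases hz with hzD | hzC2
    · have hset : {x' : X | ChainIn (fun a b => dist a b) (D ∪ Comp X y n) ((k : ℕ) : ℝ) z x'} =
          {x' : X | ChainIn (fun a b => dist a b) D ((k : ℕ) : ℝ) z x'} := by
        ext x'
        constructor
        · exact fun h => chain_closed (fun a ha b _ hd => hInv.closed a ha b (hd.trans hkR)) hzD h
        · exact fun h => h.mono_set Set.subset_union_left
      have himg : f' '' {x' : X | ChainIn (fun a b => dist a b) D ((k : ℕ) : ℝ) z x'} =
          f '' {x' : X | ChainIn (fun a b => dist a b) D ((k : ℕ) : ℝ) z x'} :=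
        Set.image_congr (fun a ha => hEqD ha.2.1)
      have hfz : f' z = f z := hEqD hzD
      rw [hset, himg, hInv.comps k hk z hzD, hfz]
      ext m
      constructor
      · exact fun h => h.mono_set hsubY
      · intro h
        refine chain_closed (fun a ha b hb hd => ?_) (hInv.bij.mapsTo hzD) h
        rcases Finset.mem_union.mp (Finset.mem_coe.mp hb) with h' | h'
        · exact Finset.mem_coe.mpr h'
        · exact absurd (hd.trans hkR) (hsep a ha b h')
    · have hset : {x' : X | ChainIn (fun a b => dist a b) (D ∪ Comp X y n) ((k : ℕ) : ℝ) z x'} =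
          {x' : X | ChainIn (fun a b => dist a b) (Comp X y n) ((k : ℕ) : ℝ) z x'} := by
        ext x'
        constructor
        · exact fun h => chain_closed (fun a ha b _ hd => hclC2 a ha b (hd.trans hkR)) hzC2 h
        · exact fun h => h.mono_set Set.subset_union_right
      have himg : f' '' {x' : X | ChainIn (fun a b => dist a b) (Comp X y n) ((k : ℕ) : ℝ) z x'} =
          (· + t) '' (g '' {x' : X | ChainIn (fun a b => dist a b) (Comp X y n) ((k : ℕ) : ℝ) z x'}) := by
        rw [← Set.image_comp]
        exact Set.image_congr (fun a ha => hEqC2 ha.2.1)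
      have hfz : f' z = g z + t := hEqC2 hzC2
      rw [hset, himg, hg.2.2 k hk z hzC2, chain_shift_set, hfz]
      ext m
      constructor
      · exact fun h => h.mono_set hsubZ
      · intro h
        refine chain_closed (fun a ha b hb hd => ?_) ⟨g z, hg.1.mapsTo hzC2, rfl⟩ h
        rcases Finset.mem_union.mp (Finset.mem_coe.mp hb) with h' | h'
        · refine absurd ((by rwa [ndist_comm] at hd : ndist b a ≤ _).trans hkR) (hsep b h' a ?_)
          obtain ⟨c, hc, rfl⟩ := ha
          exact Finset.mem_image.mpr ⟨c, hc, rfl⟩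
        · obtain ⟨c, hc, rfl⟩ := Finset.mem_image.mp h'
          exact ⟨c, hc, rfl⟩
  refine ⟨f', Y ∪ Z.image (· + t), D ∪ Comp X y n,
    ⟨hbij', ?_, hInv.subC1.trans Set.subset_union_left,
     Set.union_subset hInv.subC hC2subC, hclD', hcomps, hconn'⟩,
    Or.inr (comp_self y n), Set.subset_union_left, hEqD⟩
  rw [hEqD (hInv.subC1 (comp_self x n))]; exact hInv.base

lemma glue_aux {x : X} {n : ℕ}
    (IH : ∀ y : X, ∃ (Z : Finset ℕ) (g : X → ℕ), GoodMap X y n Z g) :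
    ∀ (l : List X) (f : X → ℕ) (Y : Finset ℕ) (D : Set X), GInv x n f Y D →
      (∀ y ∈ Comp X x (n + 1), y ∈ l ∨ y ∈ D) →
      ∃ f' Y' D', GInv x n f' Y' D' ∧ (∀ y ∈ Comp X x (n + 1), y ∈ D') ∧ Set.EqOn f' f D := by
  intro l
  induction l with
  | nil =>
      intro f Y D hInv hcov
      exact ⟨f, Y, D, hInv, fun y hy => (hcov y hy).resolve_left List.not_mem_nil,
        fun _ _ => rfl⟩
  | cons y l ih =>
      intro f Y D hInv hcov
      by_cases hy : y ∈ Comp X x (n + 1) ∧ y ∉ D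
      · obtain ⟨Z, g, hg⟩ := IH y
        obtain ⟨f₁, Y₁, D₁, hInv₁, hyD₁, hDD₁, hEq₁⟩ := inv_step hInv y hy.1 hy.2 hg
        obtain ⟨f₂, Y₂, D₂, hInv₂, hcov₂, hEq₂⟩ := ih f₁ Y₁ D₁ hInv₁ (fun z hz => by
          rcases hcov z hz with h | h
          · rcases List.mem_cons.mp h with rfl | h
            · exact Or.inr hyD₁
            · exact Or.inl h
          · exact Or.inr (hDD₁ h))
        exact ⟨f₂, Y₂, D₂, hInv₂, hcov₂, fun z hz => (hEq₂ (hDD₁ hz)).trans (hEq₁ hz)⟩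
      · obtain ⟨f₂, Y₂, D₂, hInv₂, hcov₂, hEq₂⟩ := ih f Y D hInv (fun z hz => by
          rcases hcov z hz with h | h
          · rcases List.mem_cons.mp h with rfl | h
            · by_cases hzD : z ∈ D
              · exact Or.inr hzD
              · exact absurd ⟨hz, hzD⟩ hy
            · exact Or.inl h
          · exact Or.inr h)
        exact ⟨f₂, Y₂, D₂, hInv₂, hcov₂, hEq₂⟩

lemma glue {x : X} {n : ℕ} (hfin : (Comp X x (n + 1)).Finite)
    (IH : ∀ y : X, ∃ (Z : Finset ℕ) (g : X → ℕ), GoodMap X y n Z g)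
    {Y : Finset ℕ} {f : X → ℕ} (h : GoodMap X x n Y f) :
    ∃ (Y' : Finset ℕ) (f' : X → ℕ), GoodMap X x (n + 1) Y' f' ∧ Set.EqOn f' f (Comp X x n) := by
  obtain ⟨f', Y', D', hInv, hcov, hEq⟩ := glue_aux IH hfin.toFinset.toList f Y (Comp X x n)
    (inv_init h) (fun y hy => Or.inl (by simpa using hy))
  have hD : D' = Comp X x (n + 1) := le_antisymm hInv.subC (fun y hy => hcov y hy)
  refine ⟨Y', f', ⟨?_, hInv.base, ?_⟩, hEq⟩
  · rw [← hD]; exact hInv.bij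
  · intro k hk z hz
    have hzD : z ∈ D' := by rw [hD]; exact hz
    by_cases hkn : k ≤ n
    · have hc := hInv.comps k hkn z hzD
      rw [← hD]
      exact hc
    · have hkeq : k = n + 1 := le_antisymm hk (by omega)
      subst hkeq
      have himg : f' '' Comp X x (n + 1) = ↑Y' := by rw [← hD]; exact hInv.bij.image_eq
      rw [comp_chainset hz, himg]
      have hfz : f' z ∈ Y' := hInv.bij.mapsTo hzD
      apply Set.Subset.antisymm
      · intro m hm
        have h1 := hInv.conn m hm
        have h2 := hInv.conn (f' z) hfz
        exact ((h2.symm ndist_comm).trans h1).mono_r (by push_cast; exact le_rfl)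
      · exact fun m hm => hm.2.1

lemma main_exists
    (hbg : ∀ r > (0 : ℝ), ∃ N : ℕ, ∀ x : X,
      {y : X | dist x y ≤ r}.Finite ∧ {y : X | dist x y ≤ r}.ncard ≤ N)
    (hasdim : ∀ R > (0 : ℝ), ∃ B : ℝ, ∀ x y : X,
      Relation.ReflTransGen (fun a b : X => dist a b ≤ R) x y → dist x y ≤ B) :
    ∀ (n : ℕ) (x : X), ∃ (Y : Finset ℕ) (f : X → ℕ), GoodMap X x n Y f := by
  intro n
  induction n with
  | zero =>
      intro x
      refine ⟨{0}, fun _ => 0, ⟨?_, ?_, ?_⟩, rfl, ?_⟩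
      · rw [comp_zero]; intro z hz; simp
      · rw [comp_zero]; intro a ha b hb _; rw [Set.mem_singleton_iff] at ha hb; rw [ha, hb]
      · rw [comp_zero]; intro m hm
        have : m = 0 := by simpa using hm
        exact ⟨x, rfl, this.symm⟩
      · intro k hk z hz
        have hz' : z = x := by rw [comp_zero] at hz; exact hz
        have hset : {x' : X | ChainIn (fun a b => dist a b) (Comp X x 0) ((k : ℕ) : ℝ) z x'}
            = {x} := by
          apply Set.Subset.antisymm
          · intro x' hx'
            have h2 := hx'.2.1
            rwa [comp_zero] at h2
          · intro x' hx'
            rw [Set.mem_singleton_iff] at hx'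
            rw [hx', hz']
            exact ⟨comp_self x 0, comp_self x 0, .refl⟩
        rw [hset, Set.image_singleton]
        apply Set.Subset.antisymm
        · intro m hm
          rw [Set.mem_singleton_iff] at hm
          subst hm
          exact ⟨by simp, by simp, .refl⟩
        · intro m hm
          have : m ∈ (↑({0} : Finset ℕ) : Set ℕ) := hm.2.1
          simpa using this
  | succ n ih =>
      intro x
      obtain ⟨Y, f, hf⟩ := ih x
      obtain ⟨Y', f', hf', -⟩ := glue (comp_finite hbg hasdim x n) ih hf
      exact ⟨Y', f', hf'⟩

end S14

/-- For a bounded geometry metric space of asymptotic dimension zero with base point x₀: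
every n-component Xₙ of x₀ admits a component-respecting bijection fₙ onto a finite subset
Yₙ of ℤ≥0 with fₙ(x₀) = 0; moreover any such fₙ extends to such an f_{n+1} on X_{n+1} with
Yₙ an n-connected component of Y_{n+1} (the one containing 0). -/
theorem stmt_14 (X : Type*) [MetricSpace X]
    (hbg : ∀ r > (0 : ℝ), ∃ N : ℕ, ∀ x : X,
      {y : X | dist x y ≤ r}.Finite ∧ {y : X | dist x y ≤ r}.ncard ≤ N)
    (hasdim : ∀ R > (0 : ℝ), ∃ B : ℝ, ∀ x y : X,
      Relation.ReflTransGen (fun a b : X => dist a b ≤ R) x y → dist x y ≤ B)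
    (x₀ : X) :
    (∀ n : ℕ, ∃ (Y : Finset ℕ) (f : X → ℕ), GoodMap X x₀ n Y f) ∧
    (∀ (n : ℕ) (Y : Finset ℕ) (f : X → ℕ), GoodMap X x₀ n Y f →
      ∃ (Y' : Finset ℕ) (f' : X → ℕ), GoodMap X x₀ (n + 1) Y' f' ∧
        Set.EqOn f' f (Comp X x₀ n) ∧
        (↑Y : Set ℕ) = {m : ℕ | ChainIn ndist (↑Y' : Set ℕ) (n : ℝ) 0 m}) := by
  constructor
  · intro n
    exact main_exists hbg hasdim n x₀
  · intro n Y f hf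
    obtain ⟨Y', f', hf', hEq⟩ := glue (comp_finite hbg hasdim x₀ n)
      (fun y => main_exists hbg hasdim n y) hf
    refine ⟨Y', f', hf', hEq, ?_⟩
    have h := hf'.2.2 n n.le_succ x₀ (comp_self x₀ (n + 1))
    rw [hf'.2.1] at h
    have hset : {x' : X | ChainIn (fun a b => dist a b) (Comp X x₀ (n + 1)) ((n : ℕ) : ℝ) x₀ x'}
        = Comp X x₀ n := by
      apply Set.Subset.antisymm
      · intro x' hx'
        exact rtg_mono (fun a b hab => hab.2.2) hx'.2.2
      · intro x' hx'
        exact (chain_prefix hx').mono_set (comp_mono x₀ n.le_succ)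
    rw [hset] at h
    rw [← h, Set.image_congr (fun a ha => hEq ha)]
    exact hf.1.image_eq.symm
end

section
/- Let Γ be a locally finite group, Λ ≤ Γ a finite subgroup acting on ℓ^∞(Γ) by left translation, and consider ℓ^∞(Γ) ≅ ∏_{s ∈ J} ℓ^∞(Λs) (product over a set of representatives of right cosets). For each finite partition 𝒫 of J, the set A_𝒫 of families (f_s)_{s∈J} with f_s(gs) = f_t(gt) for all g ∈ Λ whenever s and t lie in the same member of 𝒫 is a finite-dimensional Λ-invariant *-subalgebra, A_𝒫 ⊆ A_𝒬 whenever 𝒬 refines 𝒫, and every element of ∏_{s∈J} ℓ^∞(Λs) lies within ε of some A_𝒫. -/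
/-- `Part` is a finite partition of the set `J`. -/
def IsFinPartitionOf {α : Type*} (J : Set α) (Part : Finset (Set α)) : Prop :=
  (∀ P ∈ Part, P ⊆ J ∧ P.Nonempty) ∧
  (∀ P ∈ Part, ∀ Q ∈ Part, P ≠ Q → Disjoint P Q) ∧
  ⋃₀ (↑Part : Set (Set α)) = J

/-- The set A_Part ⊆ ℓ^∞(Γ) ≅ ∏_{s ∈ J} ℓ^∞(Λs) of bounded functions which are "constant"
on each member of the partition Part: f(gs) = f(gt) for all g ∈ Λ whenever s, t lie in the
same member of Part. -/
def APart {Γ : Type*} [Group Γ] (Λ : Subgroup Γ) (Part : Finset (Set Γ)) : Set (Γ → ℂ) :=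
  {f | (∃ C : ℝ, ∀ x : Γ, ‖f x‖ ≤ C) ∧
    ∀ P ∈ Part, ∀ s ∈ P, ∀ t ∈ P, ∀ g ∈ Λ, f (g * s) = f (g * t)}

/-- For Γ locally finite, Λ ≤ Γ finite, and J a set of representatives of the right cosets
of Λ: each A_Part is a finite-dimensional Λ-invariant unital *-subalgebra of
ℓ^∞(Γ) ≅ ∏_{s∈J} ℓ^∞(Λs), A_Part ⊆ A_Qart whenever Qart refines Part, and every bounded function
lies within ε of some A_Part. -/
theorem stmt_19 (Γ : Type*) [Group Γ]
    (hlf : ∀ S : Finset Γ, ((Subgroup.closure (S : Set Γ) : Subgroup Γ) : Set Γ).Finite)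
    (Λ : Subgroup Γ) (hΛfin : ((Λ : Subgroup Γ) : Set Γ).Finite)
    (J : Set Γ) (hJ : ∀ g : Γ, ∃! s : Γ, s ∈ J ∧ ∃ h ∈ Λ, g = h * s) :
    (∀ Part : Finset (Set Γ), IsFinPartitionOf J Part →
      -- A_Part is a unital *-subalgebra, invariant under the left-translation action of Λ:
      ((fun _ => (1 : ℂ)) ∈ APart Λ Part ∧
       (∀ f g : Γ → ℂ, f ∈ APart Λ Part → g ∈ APart Λ Part → f + g ∈ APart Λ Part) ∧
       (∀ f g : Γ → ℂ, f ∈ APart Λ Part → g ∈ APart Λ Part → f * g ∈ APart Λ Part) ∧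
       (∀ (c : ℂ) (f : Γ → ℂ), f ∈ APart Λ Part → c • f ∈ APart Λ Part) ∧
       (∀ f : Γ → ℂ, f ∈ APart Λ Part → (fun x => starRingEnd ℂ (f x)) ∈ APart Λ Part) ∧
       (∀ h : Γ, h ∈ Λ → ∀ f : Γ → ℂ, f ∈ APart Λ Part →
         (fun x => f (h⁻¹ * x)) ∈ APart Λ Part) ∧
      -- A_Part is finite-dimensional:
       (∃ T : Finset (Γ → ℂ), (↑T : Set (Γ → ℂ)) ⊆ APart Λ Part ∧
         APart Λ Part ⊆ (Submodule.span ℂ (↑T : Set (Γ → ℂ)) : Set (Γ → ℂ))))) ∧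
    -- monotonicity under refinement:
    (∀ Part Qart : Finset (Set Γ), IsFinPartitionOf J Part → IsFinPartitionOf J Qart →
      (∀ Q ∈ Qart, ∃ P ∈ Part, Q ⊆ P) → APart Λ Part ⊆ APart Λ Qart) ∧
    -- density:
    (∀ f : Γ → ℂ, (∃ C : ℝ, ∀ x : Γ, ‖f x‖ ≤ C) → ∀ ε > (0 : ℝ),
      ∃ Part : Finset (Set Γ), IsFinPartitionOf J Part ∧
        ∃ g ∈ APart Λ Part, ∀ x : Γ, ‖f x - g x‖ ≤ ε) := by
  classical
  -- uniqueness of the decomposition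
  have uniq : ∀ s ∈ J, ∀ t ∈ J, ∀ h ∈ (Λ : Set Γ), ∀ h' ∈ (Λ : Set Γ),
      h * s = h' * t → s = t ∧ h = h' := by
    intro s hs t ht h hh h' hh' heq
    obtain ⟨u, _, huu⟩ := hJ (h * s)
    have h1 : s = u := huu s ⟨hs, h, hh, rfl⟩
    have h2 : t = u := huu t ⟨ht, h', hh', heq⟩
    have hst : s = t := h1.trans h2.symm
    subst hst
    exact ⟨rfl, mul_right_cancel heq⟩
  refine ⟨?_, ?_, ?_⟩
  · -- algebraic properties
    intro Part hPart
    refine ⟨⟨⟨1, fun x => by simp⟩, fun P _ s _ t _ g _ => rfl⟩, ?_, ?_, ?_, ?_, ?_, ?_⟩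
    · rintro f g ⟨⟨Cf, hCf⟩, hf⟩ ⟨⟨Cg, hCg⟩, hg⟩
      refine ⟨⟨Cf + Cg, fun x => ?_⟩, fun P hP s hs t ht h hh => ?_⟩
      · exact le_trans (norm_add_le _ _) (add_le_add (hCf x) (hCg x))
      · simp only [Pi.add_apply, hf P hP s hs t ht h hh, hg P hP s hs t ht h hh]
    · rintro f g ⟨⟨Cf, hCf⟩, hf⟩ ⟨⟨Cg, hCg⟩, hg⟩
      refine ⟨⟨Cf * Cg, fun x => ?_⟩, fun P hP s hs t ht h hh => ?_⟩
      · calc ‖f x * g x‖ = ‖f x‖ * ‖g x‖ := norm_mul _ _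
          _ ≤ Cf * Cg := mul_le_mul (hCf x) (hCg x) (norm_nonneg _)
              (le_trans (norm_nonneg _) (hCf 1))
      · simp only [Pi.mul_apply, hf P hP s hs t ht h hh, hg P hP s hs t ht h hh]
    · rintro c f ⟨⟨Cf, hCf⟩, hf⟩
      refine ⟨⟨‖c‖ * Cf, fun x => ?_⟩, fun P hP s hs t ht h hh => ?_⟩
      · simpa [norm_smul] using mul_le_mul_of_nonneg_left (hCf x) (norm_nonneg c)
      · simp only [Pi.smul_apply, hf P hP s hs t ht h hh]
    · rintro f ⟨⟨Cf, hCf⟩, hf⟩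
      refine ⟨⟨Cf, fun x => ?_⟩, fun P hP s hs t ht h hh => ?_⟩
      · simpa using hCf x
      · simp only [hf P hP s hs t ht h hh]
    · rintro h hh f ⟨⟨Cf, hCf⟩, hf⟩
      refine ⟨⟨Cf, fun x => hCf _⟩, fun P hP s hs t ht g hg => ?_⟩
      have h1 : h⁻¹ * g ∈ Λ := mul_mem (inv_mem hh) hg
      simp only [← mul_assoc]
      exact hf P hP s hs t ht (h⁻¹ * g) h1
    · -- finite dimensionality
      set e : Γ → Set Γ → Γ → ℂ :=
        fun h Q x => if ∃ σ ∈ Q, x = h * σ then 1 else 0 with he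
      have repmem : ∀ Q : Set Γ, ∀ hQ : Q.Nonempty,
          (if h : Q.Nonempty then h.some else 1) ∈ Q := by
        intro Q hQ
        rw [dif_pos hQ]
        exact hQ.some_mem
      refine ⟨(hΛfin.toFinset ×ˢ Part).image (fun p => e p.1 p.2), ?_, ?_⟩
      · rintro w hw
        simp only [Finset.coe_image, Set.mem_image, Finset.mem_coe, Finset.mem_product,
          Set.Finite.mem_toFinset] at hw
        obtain ⟨⟨h, Q⟩, ⟨hh, hQ⟩, rfl⟩ := hw
        refine ⟨⟨1, fun x => ?_⟩, fun P hP s hs t ht g hg => ?_⟩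
        · by_cases hc : ∃ σ ∈ Q, x = h * σ <;> simp [he, hc]
        · have key : ∀ u ∈ P, ((∃ σ ∈ Q, g * u = h * σ) ↔ (g = h ∧ u ∈ Q)) := by
            intro u hu
            constructor
            · rintro ⟨σ, hσ, hEq⟩
              have hσJ : σ ∈ J := ((hPart.1 Q hQ).1) hσ
              have huJ : u ∈ J := ((hPart.1 P hP).1) hu
              obtain ⟨h1, h2⟩ := uniq u huJ σ hσJ g hg h hh hEq
              exact ⟨h2, h1 ▸ hσ⟩
            · rintro ⟨rfl, hu'⟩
              exact ⟨u, hu', rfl⟩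
          have hst : s ∈ Q ↔ t ∈ Q := by
            constructor <;> intro hmem
            · have hPQ : P = Q := by
                by_contra hne
                exact (Set.disjoint_left.1 (hPart.2.1 P hP Q hQ hne)) hs hmem
              exact hPQ ▸ ht
            · have hPQ : P = Q := by
                by_contra hne
                exact (Set.disjoint_left.1 (hPart.2.1 P hP Q hQ hne)) ht hmem
              exact hPQ ▸ hs
          simp only [he]
          rw [if_congr (key s hs) rfl rfl, if_congr (key t ht) rfl rfl]
          exact if_congr (and_congr Iff.rfl hst) rfl rfl
      · rintro f hfA
        obtain ⟨⟨Cf, hCf⟩, hf⟩ := hfA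
        have hfun : f = ∑ p ∈ hΛfin.toFinset ×ˢ Part,
            f (p.1 * (if h : p.2.Nonempty then h.some else 1)) • e p.1 p.2 := by
          funext x
          obtain ⟨s₀, ⟨hs₀J, h₀, hh₀, hx⟩, _⟩ := hJ x
          have hs₀U : s₀ ∈ ⋃₀ (↑Part : Set (Set Γ)) := hPart.2.2.symm ▸ hs₀J
          obtain ⟨Q₀, hQ₀, hs₀Q⟩ := hs₀U
          have hQ₀' : Q₀ ∈ Part := by exact_mod_cast hQ₀
          rw [Finset.sum_apply]
          rw [Finset.sum_eq_single ((h₀ : Γ), Q₀)]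
          · have hcond : ∃ σ ∈ Q₀, x = h₀ * σ := ⟨s₀, hs₀Q, hx⟩
            simp only [he, Pi.smul_apply, if_pos hcond, smul_eq_mul, mul_one]
            have hQ₀ne : Q₀.Nonempty := ⟨s₀, hs₀Q⟩
            have hrep := repmem Q₀ hQ₀ne
            rw [hx]
            exact (hf Q₀ hQ₀' _ hrep s₀ hs₀Q h₀ hh₀).symm
          · rintro ⟨h, Q⟩ hpmem hpne
            simp only [Finset.mem_product, Set.Finite.mem_toFinset] at hpmem
            have hcond : ¬ ∃ σ ∈ Q, x = h * σ := by
              rintro ⟨σ, hσ, hEq⟩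
              have hσJ : σ ∈ J := (hPart.1 Q hpmem.2).1 hσ
              obtain ⟨h1, h2⟩ := uniq s₀ hs₀J σ hσJ h₀ hh₀ h hpmem.1 (hx ▸ hEq)
              have hQQ : Q = Q₀ := by
                by_contra hne
                exact (Set.disjoint_left.1 (hPart.2.1 Q hpmem.2 Q₀ hQ₀' hne))
                  (h1 ▸ hσ) hs₀Q
              exact hpne (by rw [h2, hQQ])
            simp [he, hcond]
          · intro hnm
            exact absurd (Finset.mem_product.2
              ⟨Set.Finite.mem_toFinset hΛfin |>.2 hh₀, hQ₀'⟩) hnm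
        rw [hfun]
        refine Submodule.sum_mem _ (fun p hp => Submodule.smul_mem _ _ ?_)
        exact Submodule.subset_span (by
          simp only [Finset.coe_image, Set.mem_image, Finset.mem_coe]
          exact ⟨p, hp, rfl⟩)
  · -- monotonicity
    rintro Part Qart _ _ href f ⟨hb, hf⟩
    refine ⟨hb, fun Q hQ s hs t ht g hg => ?_⟩
    obtain ⟨P, hP, hQP⟩ := href Q hQ
    exact hf P hP s (hQP hs) t (hQP ht) g hg
  · -- density
    rintro f ⟨C, hC⟩ ε hε
    haveI : Fintype ↥((Λ : Subgroup Γ) : Set Γ) := hΛfin.fintype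
    set ψ : Γ → (↥((Λ : Subgroup Γ) : Set Γ) → ℂ) := fun s h => f ((h : Γ) * s) with hψ
    have hC0 : (0:ℝ) ≤ C := le_trans (norm_nonneg _) (hC 1)
    have hψball : ∀ s, ψ s ∈ Metric.closedBall (0 : ↥((Λ : Subgroup Γ) : Set Γ) → ℂ) C := by
      intro s
      rw [Metric.mem_closedBall, dist_zero_right]
      exact (pi_norm_le_iff_of_nonneg hC0).2 fun h => hC _
    have htb : TotallyBounded (Set.range ψ) :=
      ((isCompact_closedBall _ _).totallyBounded).subset
        (Set.range_subset_iff.2 hψball)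
    obtain ⟨t, htfin, htcov⟩ := (Metric.totallyBounded_iff.1 htb) (ε/2) (by linarith)
    have hcc : ∀ x : Γ, ∃ y ∈ t, ψ x ∈ Metric.ball y (ε/2) := by
      intro x
      have hh := htcov (Set.mem_range_self x)
      simpa using hh
    choose c hct hcb using hcc
    set Cl : (↥((Λ : Subgroup Γ) : Set Γ) → ℂ) → Set Γ := fun y => {s ∈ J | c s = y} with hCl
    set Part : Finset (Set Γ) :=
      (htfin.toFinset.image Cl).filter (fun P => P.Nonempty) with hPartdef
    have hmemPart : ∀ P ∈ Part, ∃ y ∈ t, P = Cl y ∧ P.Nonempty := by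
      intro P hP
      rw [hPartdef, Finset.mem_filter, Finset.mem_image] at hP
      obtain ⟨⟨y, hy, rfl⟩, hne⟩ := hP
      exact ⟨y, Set.Finite.mem_toFinset htfin |>.1 hy, rfl, hne⟩
    have hPart : IsFinPartitionOf J Part := by
      refine ⟨?_, ?_, ?_⟩
      · intro P hP
        obtain ⟨y, _, rfl, hne⟩ := hmemPart P hP
        exact ⟨fun s hs => hs.1, hne⟩
      · intro P hP Q hQ hne
        obtain ⟨y, _, rfl, _⟩ := hmemPart P hP
        obtain ⟨z, _, rfl, _⟩ := hmemPart Q hQ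
        rw [Set.disjoint_left]
        rintro a ⟨_, ha1⟩ ⟨_, ha2⟩
        exact hne (by rw [hCl]; rw [← ha1, ← ha2])
      · apply Set.eq_of_subset_of_subset
        · rintro x ⟨P, hP, hxP⟩
          obtain ⟨y, _, rfl, _⟩ := hmemPart P (by exact_mod_cast hP)
          exact hxP.1
        · intro s hs
          refine ⟨Cl (c s), ?_, ⟨hs, rfl⟩⟩
          simp only [hPartdef, Finset.coe_filter, Set.mem_setOf_eq, Finset.mem_image]
          exact ⟨⟨c s, Set.Finite.mem_toFinset htfin |>.2 (hct s), rfl⟩, ⟨s, hs, rfl⟩⟩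
    -- decomposition functions
    have hdec : ∀ x : Γ, ∃ s, s ∈ J ∧ ∃ h ∈ (Λ : Set Γ), x = h * s := fun x => (hJ x).exists
    choose σ hσJ hσd using hdec
    choose η hηΛ hηeq using hσd
    set rep : Set Γ → Γ := fun P => if h : P.Nonempty then h.some else 1 with hrep
    have repmem : ∀ Q : Set Γ, Q.Nonempty → rep Q ∈ Q := by
      intro Q hQ
      rw [hrep]
      simp only [dif_pos hQ]
      exact hQ.some_mem
    set g : Γ → ℂ := fun x => f (η x * rep (Cl (c (σ x)))) with hg
    have hClne : ∀ x : Γ, (Cl (c (σ x))).Nonempty := fun x => ⟨σ x, hσJ x, rfl⟩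
    have hkey : ∀ s ∈ J, ∀ h ∈ (Λ : Set Γ), σ (h * s) = s ∧ η (h * s) = h := by
      intro s hs h hh
      have h1 := hηeq (h * s)
      exact uniq (σ (h * s)) (hσJ (h * s)) s hs (η (h * s)) (hηΛ (h * s)) h hh h1.symm
    refine ⟨Part, hPart, g, ⟨⟨C, fun x => hC _⟩, ?_⟩, ?_⟩
    · -- g ∈ APart
      intro P hP s hs tt htt h hh
      obtain ⟨y, _, rfl, _⟩ := hmemPart P hP
      obtain ⟨hσs, hηs⟩ := hkey s hs.1 h hh
      obtain ⟨hσt, hηt⟩ := hkey tt htt.1 h hh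
      rw [hg]
      simp only [hσs, hσt, hηs, hηt, hs.2, htt.2]
    · -- approximation
      intro x
      have hrepP : rep (Cl (c (σ x))) ∈ Cl (c (σ x)) := repmem _ (hClne x)
      have hrepc : c (rep (Cl (c (σ x)))) = c (σ x) := hrepP.2
      have hfx : f x = ψ (σ x) ⟨η x, hηΛ x⟩ := by
        rw [hψ]; simp only; rw [← hηeq x]
      have hgx : g x = ψ (rep (Cl (c (σ x)))) ⟨η x, hηΛ x⟩ := by
        rw [hg, hψ]
      rw [hfx, hgx, ← dist_eq_norm]
      calc dist (ψ (σ x) ⟨η x, hηΛ x⟩) (ψ (rep (Cl (c (σ x)))) ⟨η x, hηΛ x⟩)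
          ≤ dist (ψ (σ x)) (ψ (rep (Cl (c (σ x))))) := dist_le_pi_dist _ _ _
        _ ≤ dist (ψ (σ x)) (c (σ x)) + dist (c (σ x)) (ψ (rep (Cl (c (σ x))))) :=
            dist_triangle _ _ _
        _ ≤ ε/2 + ε/2 := by
            refine add_le_add (le_of_lt ?_) (le_of_lt ?_)
            · have hh := hcb (σ x); rwa [Metric.mem_ball] at hh
            · have hh := hcb (rep (Cl (c (σ x))))
              rw [Metric.mem_ball, hrepc] at hh
              rwa [dist_comm]
        _ = ε := by ring
end
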